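/- arXiv:2203.10497 — 8 statements merged into one kernel-verified Lean document; each statement's English description precedes it below -/
import Mathlib

section
/- Let T > 0, λ > 0, n ∈ ℕ, and let ρ₁, β ≥ 0. Let D : ℝⁿ → ℝⁿ be a linear map whose operator norm (with respect to the Euclidean norm) is at most ρ₁, and let Φ : [0,T] → (linear maps ℝⁿ → ℝⁿ) be continuous with ‖Φ(t)‖ ≤ β for all t ∈ [0,T]. For a continuous f : [0,T] → ℝⁿ define g(t) = D(f(t)) + ∫₀ᵗ Φ(t−τ)(f(τ)) dτ. Then ‖g‖_λ ≤ (ρ₁ + β/λ)·‖f‖_λ, i.e., sup_{t∈[0,T]} e^{−λt}‖g(t)‖ ≤ (ρ₁ + β/λ)·sup_{t∈[0,T]} e^{−λt}‖f(t)‖. -/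
open MeasureTheory Set

/-!
Write `M = ‖f‖_λ`, so that `‖f τ‖ ≤ e^{λτ} M`. Then `‖D (f t)‖ ≤ ρ₁ e^{λt} M`, and bounding the
kernel by `β` gives `‖∫₀ᵗ Φ(t-τ)(f τ) dτ‖ ≤ β M ∫₀ᵗ e^{λτ} dτ = β M (e^{λt} - 1)/λ`.
Multiplying by `e^{-λt}` and discarding the term `-β M e^{-λt}/λ` gives the bound pointwise.
-/

theorem integral_exp_const_mul {c : ℝ} (hc : c ≠ 0) (a b : ℝ) :
    ∫ x in a..b, Real.exp (c * x) = (Real.exp (c * b) - Real.exp (c * a)) / c := by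
  rw [intervalIntegral.integral_comp_mul_left (fun x => Real.exp x) hc, integral_exp,
    smul_eq_mul, inv_mul_eq_div]

theorem le_exp_mul_of_exp_neg_mul_le {lam τ a M : ℝ} (h : Real.exp (-lam * τ) * a ≤ M) :
    a ≤ Real.exp (lam * τ) * M := by
  rwa [neg_mul, Real.exp_neg, ← div_eq_inv_mul, div_le_iff₀ (Real.exp_pos _), mul_comm] at h

section Volterra

variable {E F : Type*} [NormedAddCommGroup E] [NormedSpace ℝ E]
  [NormedAddCommGroup F] [NormedSpace ℝ F]

theorem norm_integral_volterra_le {Φ : ℝ → E →L[ℝ] F} {f : ℝ → E} {lam β M t : ℝ}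
    (hlam : lam ≠ 0) (ht : 0 ≤ t) (hΦ : ∀ s ∈ Icc 0 t, ‖Φ s‖ ≤ β)
    (hf : ∀ τ ∈ Icc 0 t, ‖f τ‖ ≤ Real.exp (lam * τ) * M) :
    ‖∫ τ in (0 : ℝ)..t, Φ (t - τ) (f τ)‖ ≤ β * M * ((Real.exp (lam * t) - 1) / lam) := by
  have hbound : ∀ τ ∈ Ioc 0 t, ‖Φ (t - τ) (f τ)‖ ≤ β * M * Real.exp (lam * τ) := by
    rintro τ ⟨hτ0, hτt⟩
    have hβ : 0 ≤ β := (norm_nonneg _).trans (hΦ (t - τ) ⟨by linarith, by linarith⟩)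
    calc ‖Φ (t - τ) (f τ)‖ ≤ ‖Φ (t - τ)‖ * ‖f τ‖ := (Φ (t - τ)).le_opNorm _
      _ ≤ β * (Real.exp (lam * τ) * M) :=
          mul_le_mul (hΦ _ ⟨by linarith, by linarith⟩) (hf τ ⟨hτ0.le, hτt⟩) (norm_nonneg _) hβ
      _ = β * M * Real.exp (lam * τ) := by ring
  have hcont : Continuous fun τ => β * M * Real.exp (lam * τ) := by fun_prop
  have hint := intervalIntegral.norm_integral_le_of_norm_le ht
    (Filter.Eventually.of_forall hbound) (hcont.intervalIntegrable (μ := volume) 0 t)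
  rwa [intervalIntegral.integral_const_mul, integral_exp_const_mul hlam, mul_zero,
    Real.exp_zero] at hint

theorem exp_neg_mul_norm_add_integral_volterra_le {D : E →L[ℝ] F} {Φ : ℝ → E →L[ℝ] F}
    {f : ℝ → E} {lam ρ β M t : ℝ} (hlam : 0 < lam) (ht : 0 ≤ t) (hD : ‖D‖ ≤ ρ)
    (hΦ : ∀ s ∈ Icc 0 t, ‖Φ s‖ ≤ β)
    (hf : ∀ τ ∈ Icc 0 t, Real.exp (-lam * τ) * ‖f τ‖ ≤ M) :
    Real.exp (-lam * t) * ‖D (f t) + ∫ τ in (0 : ℝ)..t, Φ (t - τ) (f τ)‖ ≤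
      (ρ + β / lam) * M := by
  have hρ : 0 ≤ ρ := (norm_nonneg D).trans hD
  have hβ : 0 ≤ β := (norm_nonneg _).trans (hΦ 0 ⟨le_rfl, ht⟩)
  have hM : 0 ≤ M := (by positivity : 0 ≤ Real.exp (-lam * 0) * ‖f 0‖).trans (hf 0 ⟨le_rfl, ht⟩)
  have hft := hf t ⟨ht, le_rfl⟩
  have hDf : ‖D (f t)‖ ≤ ρ * ‖f t‖ :=
    (D.le_opNorm _).trans (mul_le_mul_of_nonneg_right hD (norm_nonneg _))
  have hint := norm_integral_volterra_le hlam.ne' ht hΦ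
    fun τ hτ => le_exp_mul_of_exp_neg_mul_le (hf τ hτ)
  have hexp : Real.exp (-lam * t) * Real.exp (lam * t) = 1 := by
    rw [← Real.exp_add, neg_mul, neg_add_cancel, Real.exp_zero]
  calc Real.exp (-lam * t) * ‖D (f t) + ∫ τ in (0 : ℝ)..t, Φ (t - τ) (f τ)‖
      ≤ Real.exp (-lam * t) * (ρ * ‖f t‖ + β * M * ((Real.exp (lam * t) - 1) / lam)) :=
        mul_le_mul_of_nonneg_left ((norm_add_le _ _).trans (add_le_add hDf hint))
          (Real.exp_pos _).le
    _ = ρ * (Real.exp (-lam * t) * ‖f t‖) + β / lam * M * (1 - Real.exp (-lam * t)) := by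
        linear_combination (β * M / lam) * hexp
    _ ≤ ρ * M + β / lam * M * 1 := by
        gcongr
        linarith [Real.exp_pos (-lam * t)]
    _ = (ρ + β / lam) * M := by ring

end Volterra

theorem lambda_norm_contraction_general
    (T lam : ℝ) (hlam : 0 < lam) (n : ℕ) (ρ₁ β : ℝ)
    (D : EuclideanSpace ℝ (Fin n) →L[ℝ] EuclideanSpace ℝ (Fin n)) (hD : ‖D‖ ≤ ρ₁)
    (Φ : ℝ → (EuclideanSpace ℝ (Fin n) →L[ℝ] EuclideanSpace ℝ (Fin n)))
    (hΦbound : ∀ t ∈ Icc (0:ℝ) T, ‖Φ t‖ ≤ β)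
    (f : ℝ → EuclideanSpace ℝ (Fin n)) (hf : ContinuousOn f (Icc 0 T))
    (g : ℝ → EuclideanSpace ℝ (Fin n))
    (hg : ∀ t ∈ Icc (0:ℝ) T, g t = D (f t) + ∫ τ in (0:ℝ)..t, (Φ (t - τ)) (f τ)) :
    (⨆ t : Icc (0:ℝ) T, Real.exp (-lam * t) * ‖g t‖) ≤
      (ρ₁ + β / lam) * ⨆ t : Icc (0:ℝ) T, Real.exp (-lam * t) * ‖f t‖ := by
  rcases isEmpty_or_nonempty (Icc (0:ℝ) T) with _ | _
  · simp [Real.iSup_of_isEmpty]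
  have hbdd : BddAbove (range fun t : Icc (0:ℝ) T => Real.exp (-lam * t) * ‖f t‖) := by
    have hcont : ContinuousOn (fun t => Real.exp (-lam * t) * ‖f t‖) (Icc 0 T) := by fun_prop
    simpa only [image_eq_range] using (isCompact_Icc.image_of_continuousOn hcont).bddAbove
  refine ciSup_le fun ⟨t, ht⟩ => ?_
  rw [hg t ht]
  exact exp_neg_mul_norm_add_integral_volterra_le hlam ht.1 hD
    (fun s hs => hΦbound s ⟨hs.1, hs.2.trans ht.2⟩)
    (fun τ hτ => le_ciSup hbdd ⟨τ, hτ.1, hτ.2.trans ht.2⟩)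

/-- The λ-norm contraction estimate: for `g t = D (f t) + ∫₀ᵗ Φ(t-τ)(f τ) dτ`,
one has `‖g‖_λ ≤ (ρ₁ + β/λ) ‖f‖_λ`, where `‖f‖_λ = sup_{t∈[0,T]} e^{-λ t} ‖f t‖`
(Euclidean norm on ℝⁿ). -/
theorem lambda_norm_contraction
    (T lam : ℝ) (hT : 0 < T) (hlam : 0 < lam) (n : ℕ) (ρ₁ β : ℝ)
    (hρ₁ : 0 ≤ ρ₁) (hβ : 0 ≤ β)
    (D : EuclideanSpace ℝ (Fin n) →L[ℝ] EuclideanSpace ℝ (Fin n)) (hD : ‖D‖ ≤ ρ₁)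
    (Φ : ℝ → (EuclideanSpace ℝ (Fin n) →L[ℝ] EuclideanSpace ℝ (Fin n)))
    (hΦcont : ContinuousOn Φ (Icc 0 T))
    (hΦbound : ∀ t ∈ Icc (0:ℝ) T, ‖Φ t‖ ≤ β)
    (f : ℝ → EuclideanSpace ℝ (Fin n)) (hf : ContinuousOn f (Icc 0 T))
    (g : ℝ → EuclideanSpace ℝ (Fin n))
    (hg : ∀ t ∈ Icc (0:ℝ) T, g t = D (f t) + ∫ τ in (0:ℝ)..t, (Φ (t - τ)) (f τ)) :
    (⨆ t : Icc (0:ℝ) T, Real.exp (-lam * t) * ‖g t‖) ≤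
      (ρ₁ + β / lam) * ⨆ t : Icc (0:ℝ) T, Real.exp (-lam * t) * ‖f t‖ :=
  lambda_norm_contraction_general T lam hlam n ρ₁ β D hD Φ hΦbound f hf g hg
end

section
/- Let T > 0, n ∈ ℕ, let D : ℝⁿ → ℝⁿ be a linear map with operator norm ‖D‖ ≤ ρ₁ < 1 (with respect to the Euclidean norm), and let Φ : [0,T] → (linear maps ℝⁿ → ℝⁿ) be continuous. Suppose (f_k)_{k∈ℕ} is a sequence of continuous functions [0,T] → ℝⁿ satisfying f_{k+1}(t) = D(f_k(t)) + ∫₀ᵗ Φ(t−τ)(f_k(τ)) dτ for all t ∈ [0,T] and all k. Then there exist λ > 0 and ρ ∈ [0,1) such that ‖f_k‖_λ ≤ ρᵏ·‖f₀‖_λ for all k ∈ ℕ; in particular f_k converges to 0 uniformly on [0,T]. -/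
/-!
Bounding the kernel by `M` on `[0,T]` and using `∫₀ᵗ e^{λτ} dτ ≤ e^{λt}/λ`, the Volterra term
`∫₀ᵗ Φ(t-τ) g(τ) dτ` has λ-norm at most `(M/λ) ‖g‖_λ`. Hence the recursion contracts the λ-norm by
`‖D‖ + M/λ`, which is `< 1` once `λ` is large. On `[0,T]` the λ-norm dominates the sup norm up to the
factor `e^{λT}`, so geometric decay in the λ-norm gives uniform convergence to `0`.
-/

open MeasureTheory Set Filter Real Topology

noncomputable def lambdaNorm {E : Type*} [NormedAddCommGroup E] (lam T : ℝ) (g : ℝ → E) : ℝ :=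
  ⨆ t : Icc (0:ℝ) T, exp (-lam * t) * ‖g t‖

section LambdaNorm

variable {E : Type*} [NormedAddCommGroup E] {lam T : ℝ} {g : ℝ → E}

theorem lambdaNorm_nonneg : 0 ≤ lambdaNorm lam T g :=
  Real.iSup_nonneg fun _ => by positivity

theorem bddAbove_range_exp_mul_norm (hg : ContinuousOn g (Icc 0 T)) :
    BddAbove (range fun t : Icc (0:ℝ) T => exp (-lam * t) * ‖g t‖) := by
  have hcont : ContinuousOn (fun t => exp (-lam * t) * ‖g t‖) (Icc 0 T) := by fun_prop
  exact (isCompact_Icc.image_of_continuousOn hcont).bddAbove.mono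
    (range_subset_iff.2 fun t => mem_image_of_mem _ t.2)

theorem exp_mul_norm_le_lambdaNorm (hg : ContinuousOn g (Icc 0 T)) {t : ℝ} (ht : t ∈ Icc 0 T) :
    exp (-lam * t) * ‖g t‖ ≤ lambdaNorm lam T g :=
  le_ciSup (bddAbove_range_exp_mul_norm hg) ⟨t, ht⟩

theorem norm_le_exp_mul_lambdaNorm (hg : ContinuousOn g (Icc 0 T)) {t : ℝ} (ht : t ∈ Icc 0 T) :
    ‖g t‖ ≤ exp (lam * t) * lambdaNorm lam T g := by
  have h := exp_mul_norm_le_lambdaNorm (lam := lam) hg ht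
  rwa [neg_mul, exp_neg, inv_mul_le_iff₀ (exp_pos _)] at h

theorem lambdaNorm_le (hT : 0 ≤ T) {C : ℝ} (h : ∀ t ∈ Icc 0 T, exp (-lam * t) * ‖g t‖ ≤ C) :
    lambdaNorm lam T g ≤ C :=
  have : Nonempty (Icc (0:ℝ) T) := (nonempty_Icc.2 hT).to_subtype
  ciSup_le fun t => h t t.2

theorem tendstoUniformlyOn_zero_of_norm_le {ι α : Type*} {l : Filter ι} {f : ι → α → E}
    {s : Set α} {u : ι → ℝ} (hf : ∀ i, ∀ x ∈ s, ‖f i x‖ ≤ u i) (hu : Tendsto u l (𝓝 0)) :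
    TendstoUniformlyOn f 0 l s :=
  SeminormedAddGroup.tendstoUniformlyOn_zero.2 fun _ hε =>
    (hu.eventually (gt_mem_nhds hε)).mono fun i hi x hx => (hf i x hx).trans_lt hi

theorem tendstoUniformlyOn_zero_of_tendsto_lambdaNorm {ι : Type*} {l : Filter ι} {f : ι → ℝ → E}
    (hlam : 0 ≤ lam) (hf : ∀ i, ContinuousOn (f i) (Icc 0 T))
    (hlim : Tendsto (fun i => lambdaNorm lam T (f i)) l (𝓝 0)) :
    TendstoUniformlyOn f 0 l (Icc 0 T) := by
  refine tendstoUniformlyOn_zero_of_norm_le (u := fun i => exp (lam * T) * lambdaNorm lam T (f i))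
    (fun i t ht => ?_) (by simpa using hlim.const_mul (exp (lam * T)))
  calc ‖f i t‖ ≤ exp (lam * t) * lambdaNorm lam T (f i) := norm_le_exp_mul_lambdaNorm (hf i) ht
    _ ≤ exp (lam * T) * lambdaNorm lam T (f i) := by
      gcongr
      · exact lambdaNorm_nonneg
      · exact ht.2

end LambdaNorm

theorem integral_exp_mul_le {lam : ℝ} (hlam : 0 < lam) (t : ℝ) :
    ∫ τ in (0:ℝ)..t, exp (lam * τ) ≤ exp (lam * t) / lam := by
  rw [intervalIntegral.integral_comp_mul_left (fun x => exp x) hlam.ne', integral_exp, mul_zero,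
    exp_zero, smul_eq_mul, inv_mul_eq_div]
  gcongr
  linarith

section Volterra

variable {E F : Type*} [NormedAddCommGroup E] [NormedAddCommGroup F] [NormedSpace ℝ E]
  [NormedSpace ℝ F] {lam T M : ℝ} {Φ : ℝ → E →L[ℝ] F} {g : ℝ → E}

theorem exp_mul_norm_volterra_le (hlam : 0 < lam) (hΦ : ∀ s ∈ Icc 0 T, ‖Φ s‖ ≤ M)
    (hg : ContinuousOn g (Icc 0 T)) {t : ℝ} (ht : t ∈ Icc 0 T) :
    exp (-lam * t) * ‖∫ τ in (0:ℝ)..t, Φ (t - τ) (g τ)‖ ≤ M / lam * lambdaNorm lam T g := by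
  set N := lambdaNorm lam T g
  have hM : 0 ≤ M := (norm_nonneg _).trans (hΦ 0 ⟨le_rfl, ht.1.trans ht.2⟩)
  have hpointwise : ∀ τ ∈ Ioc 0 t, ‖Φ (t - τ) (g τ)‖ ≤ M * N * exp (lam * τ) := by
    intro τ hτ
    have hτT : τ ∈ Icc 0 T := ⟨hτ.1.le, hτ.2.trans ht.2⟩
    calc ‖Φ (t - τ) (g τ)‖ ≤ ‖Φ (t - τ)‖ * ‖g τ‖ := (Φ (t - τ)).le_opNorm _
      _ ≤ M * (exp (lam * τ) * N) := by
        gcongr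
        · exact hΦ _ ⟨by linarith [hτ.2], by linarith [hτ.1, ht.2]⟩
        · exact norm_le_exp_mul_lambdaNorm hg hτT
      _ = M * N * exp (lam * τ) := by ring
  have hintegral : ‖∫ τ in (0:ℝ)..t, Φ (t - τ) (g τ)‖ ≤ M * N * (exp (lam * t) / lam) :=
    calc ‖∫ τ in (0:ℝ)..t, Φ (t - τ) (g τ)‖ ≤ ∫ τ in (0:ℝ)..t, M * N * exp (lam * τ) :=
          intervalIntegral.norm_integral_le_of_norm_le ht.1 (ae_of_all _ hpointwise)
            (by apply Continuous.intervalIntegrable; fun_prop)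
      _ = M * N * ∫ τ in (0:ℝ)..t, exp (lam * τ) := intervalIntegral.integral_const_mul _ _
      _ ≤ M * N * (exp (lam * t) / lam) := by
        have : 0 ≤ N := lambdaNorm_nonneg
        gcongr
        exact integral_exp_mul_le hlam t
  calc exp (-lam * t) * ‖∫ τ in (0:ℝ)..t, Φ (t - τ) (g τ)‖
      ≤ exp (-lam * t) * (M * N * (exp (lam * t) / lam)) := by gcongr
    _ = M / lam * N := by
      rw [neg_mul, exp_neg]
      field_simp

theorem lambdaNorm_le_of_eq_volterra {D : E →L[ℝ] F} {h : ℝ → F} (hT : 0 ≤ T) (hlam : 0 < lam)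
    (hΦ : ∀ s ∈ Icc 0 T, ‖Φ s‖ ≤ M) (hg : ContinuousOn g (Icc 0 T))
    (hh : ∀ t ∈ Icc 0 T, h t = D (g t) + ∫ τ in (0:ℝ)..t, Φ (t - τ) (g τ)) :
    lambdaNorm lam T h ≤ (‖D‖ + M / lam) * lambdaNorm lam T g := by
  refine lambdaNorm_le hT fun t ht => ?_
  rw [hh t ht]
  set I := ∫ τ in (0:ℝ)..t, Φ (t - τ) (g τ)
  calc exp (-lam * t) * ‖D (g t) + I‖ ≤ exp (-lam * t) * (‖D‖ * ‖g t‖ + ‖I‖) := by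
        gcongr
        exact (norm_add_le _ _).trans (add_le_add_left (D.le_opNorm _) _)
    _ = ‖D‖ * (exp (-lam * t) * ‖g t‖) + exp (-lam * t) * ‖I‖ := by ring
    _ ≤ ‖D‖ * lambdaNorm lam T g + M / lam * lambdaNorm lam T g :=
        add_le_add (mul_le_mul_of_nonneg_left (exp_mul_norm_le_lambdaNorm hg ht) (norm_nonneg D))
          (exp_mul_norm_volterra_le hlam hΦ hg ht)
    _ = (‖D‖ + M / lam) * lambdaNorm lam T g := by ring

end Volterra

theorem exists_pos_add_div_lt_one {a : ℝ} (ha : a < 1) (M : ℝ) :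
    ∃ lam : ℝ, 0 < lam ∧ a + M / lam < 1 := by
  have hsmall : ∀ᶠ lam in atTop, M / lam < 1 - a :=
    (tendsto_const_nhds.div_atTop tendsto_id).eventually (gt_mem_nhds (sub_pos.2 ha))
  obtain ⟨lam, hpos, hlt⟩ := ((eventually_gt_atTop 0).and hsmall).exists
  exact ⟨lam, hpos, by linarith⟩

/-- If `‖D‖ ≤ ρ₁ < 1` and `f_{k+1}(t) = D (f_k t) + ∫₀ᵗ Φ(t-τ)(f_k τ) dτ`,
then for a suitable `λ > 0` there is `ρ ∈ [0,1)` with `‖f_k‖_λ ≤ ρᵏ ‖f₀‖_λ`; in particular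
`f_k → 0` uniformly on `[0,T]`. -/
theorem lambda_norm_geometric_decay
    (T : ℝ) (hT : 0 < T) (n : ℕ) (ρ₁ : ℝ) (hρ₁ : ρ₁ < 1)
    (D : EuclideanSpace ℝ (Fin n) →L[ℝ] EuclideanSpace ℝ (Fin n)) (hD : ‖D‖ ≤ ρ₁)
    (Φ : ℝ → (EuclideanSpace ℝ (Fin n) →L[ℝ] EuclideanSpace ℝ (Fin n)))
    (hΦcont : ContinuousOn Φ (Icc 0 T))
    (f : ℕ → ℝ → EuclideanSpace ℝ (Fin n))
    (hfcont : ∀ k, ContinuousOn (f k) (Icc 0 T))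
    (hrec : ∀ k, ∀ t ∈ Icc (0:ℝ) T,
      f (k + 1) t = D (f k t) + ∫ τ in (0:ℝ)..t, (Φ (t - τ)) (f k τ)) :
    (∃ lam : ℝ, 0 < lam ∧ ∃ ρ : ℝ, ρ ∈ Ico (0:ℝ) 1 ∧ ∀ k : ℕ,
        (⨆ t : Icc (0:ℝ) T, Real.exp (-lam * t) * ‖f k t‖) ≤
          ρ ^ k * ⨆ t : Icc (0:ℝ) T, Real.exp (-lam * t) * ‖f 0 t‖) ∧
      TendstoUniformlyOn f 0 atTop (Icc 0 T) := by
  obtain ⟨M, hΦM⟩ := isCompact_Icc.exists_bound_of_continuousOn hΦcont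
  obtain ⟨lam, hlam, hρ⟩ := exists_pos_add_div_lt_one (hD.trans_lt hρ₁) M
  have hM : 0 ≤ M := (norm_nonneg _).trans (hΦM 0 ⟨le_rfl, hT.le⟩)
  have hρ0 : 0 ≤ ‖D‖ + M / lam := by positivity
  have hdecay : ∀ k, lambdaNorm lam T (f k) ≤ (‖D‖ + M / lam) ^ k * lambdaNorm lam T (f 0) :=
    fun k => le_geom (u := fun k => lambdaNorm lam T (f k)) hρ0 k fun j _ =>
      lambdaNorm_le_of_eq_volterra hT.le hlam hΦM (hfcont j) (hrec j)
  refine ⟨⟨lam, hlam, _, ⟨hρ0, hρ⟩, hdecay⟩, ?_⟩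
  refine tendstoUniformlyOn_zero_of_tendsto_lambdaNorm hlam.le hfcont ?_
  refine squeeze_zero (fun _ => lambdaNorm_nonneg) hdecay ?_
  simpa using (tendsto_pow_atTop_nhds_zero_of_lt_one hρ0 hρ).mul_const (lambdaNorm lam T (f 0))
end

section
/- Let T > 0, n ∈ ℕ, let D be a real n×n matrix with ρ(D) < 1, and let Φ : [0,T] → ℝ^{n×n} be continuous. Suppose (f_k)_{k∈ℕ} is a sequence of continuous functions [0,T] → ℝⁿ such that f_{k+2}(t) − f_{k+1}(t) = D·(f_{k+1}(t) − f_k(t)) + ∫₀ᵗ Φ(t−τ)·(f_{k+1}(τ) − f_k(τ)) dτ for all t ∈ [0,T] and all k ∈ ℕ. Then there exists a continuous function f_∞ : [0,T] → ℝⁿ such that f_k converges to f_∞ uniformly on [0,T]. -/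
open MeasureTheory Set Filter

open Topology

section SpectralAux

open scoped ENNReal NNReal

attribute [local instance] Matrix.linftyOpNormedAddCommGroup Matrix.linftyOpNormedSpace
  Matrix.linftyOpNormedRing Matrix.linftyOpNormedAlgebra

lemma fcs_aux_norm_map (n : ℕ) (A : Matrix (Fin n) (Fin n) ℝ) :
    ‖A.map Complex.ofReal‖ = ‖A‖ := by
  rw [Matrix.linfty_opNorm_def, Matrix.linfty_opNorm_def]
  congr 2
  ext i
  congr 1
  ext j
  simp [Matrix.map_apply]

lemma fcs_exists_geom_bound (n : ℕ) (D : Matrix (Fin n) (Fin n) ℝ)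
    (hspec : ∀ μ ∈ spectrum ℂ (D.map Complex.ofReal), ‖μ‖ < 1) :
    ∃ C r : ℝ, 1 ≤ C ∧ 0 < r ∧ r < 1 ∧
      ∀ (p : ℕ) (v : Fin n → ℝ), ‖(D ^ p).mulVec v‖ ≤ C * r ^ p * ‖v‖ := by
  haveI : CompleteSpace (Matrix (Fin n) (Fin n) ℂ) :=
    inferInstance
  set Dc : Matrix (Fin n) (Fin n) ℂ := D.map Complex.ofReal with hDc
  have hmul : ∀ A B : Matrix (Fin n) (Fin n) ℝ,
      (A * B).map Complex.ofReal = A.map Complex.ofReal * B.map Complex.ofReal := by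
    intro A B
    ext i j
    simp [Matrix.mul_apply, Matrix.map_apply]
  have hmap : ∀ p : ℕ, (D ^ p).map Complex.ofReal = Dc ^ p := by
    intro p
    induction p with
    | zero =>
      ext i j
      simp [Matrix.map_apply, Matrix.one_apply, apply_ite Complex.ofReal]
    | succ p ih => rw [pow_succ, pow_succ, hmul, ih]
  have hρ : spectralRadius ℂ Dc < 1 := by
    rcases Set.eq_empty_or_nonempty (spectrum ℂ Dc) with h | h
    · simp [spectralRadius, h]
    · have := spectrum.spectralRadius_lt_of_forall_lt_of_nonempty h (r := 1)
        (fun k hk => by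
          have h2 := hspec k hk
          exact_mod_cast h2)
      simpa using this
  obtain ⟨c, hc1, hc2⟩ := exists_between
    (show max (spectralRadius ℂ Dc) (1 / 2) < 1 from max_lt hρ (by norm_num))
  have hc0 : c ≠ 0 := (lt_of_le_of_lt (zero_le : (0:ℝ≥0∞) ≤ _) hc1).ne'
  have hctop : c ≠ ⊤ := (lt_of_lt_of_le hc2 le_top).ne
  set r : ℝ≥0 := c.toNNReal with hrdef
  have hcr : c = (r : ℝ≥0∞) := (ENNReal.coe_toNNReal hctop).symm
  have hr1 : (r : ℝ) < 1 := by
    have : (r : ℝ≥0∞) < 1 := hcr ▸ hc2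
    exact_mod_cast this
  have hr0 : 0 < (r : ℝ) := by
    have : 0 < r := ENNReal.toNNReal_pos hc0 hctop
    exact_mod_cast this
  have hgel := spectrum.pow_nnnorm_pow_one_div_tendsto_nhds_spectralRadius Dc
  have hev : ∀ᶠ p : ℕ in atTop, (‖Dc ^ p‖₊ : ℝ≥0∞) ^ (1 / (p : ℝ)) < c :=
    hgel.eventually_lt_const (lt_of_le_of_lt (le_max_left _ _) hc1)
  obtain ⟨P, hP⟩ := eventually_atTop.mp (hev.and (eventually_ge_atTop 1))
  have hDcpow : ∀ p, P ≤ p → ‖Dc ^ p‖ ≤ (r : ℝ) ^ p := by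
    intro p hp
    obtain ⟨h1, h2⟩ := hP p hp
    have hp0 : (p : ℝ) ≠ 0 := Nat.cast_ne_zero.mpr (by omega)
    have h3 : (‖Dc ^ p‖₊ : ℝ≥0∞) ≤ c ^ p := by
      have h4 := ENNReal.rpow_le_rpow h1.le (by positivity : (0 : ℝ) ≤ (p : ℝ))
      rwa [← ENNReal.rpow_mul, one_div,
        inv_mul_cancel₀ hp0, ENNReal.rpow_one, ENNReal.rpow_natCast] at h4
    rw [hcr, ← ENNReal.coe_pow, ENNReal.coe_le_coe] at h3
    calc ‖Dc ^ p‖ = ((‖Dc ^ p‖₊ : ℝ≥0) : ℝ) := (coe_nnnorm _).symm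
      _ ≤ ((r ^ p : ℝ≥0) : ℝ) := by exact_mod_cast h3
      _ = (r : ℝ) ^ p := by push_cast; ring
  set Creal : ℝ := 1 + ∑ j ∈ Finset.range P, ‖D ^ j‖ / (r : ℝ) ^ j with hCdef
  have hCge1 : 1 ≤ Creal := by
    have : 0 ≤ ∑ j ∈ Finset.range P, ‖D ^ j‖ / (r : ℝ) ^ j :=
      Finset.sum_nonneg fun j _ => by positivity
    simp only [hCdef]; linarith
  have hnormpow : ∀ p : ℕ, ‖D ^ p‖ = ‖Dc ^ p‖ := by
    intro p; rw [← hmap p, fcs_aux_norm_map]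
  have hDpow : ∀ p : ℕ, ‖D ^ p‖ ≤ Creal * (r : ℝ) ^ p := by
    intro p
    rcases le_or_gt P p with h | h
    · calc ‖D ^ p‖ = ‖Dc ^ p‖ := hnormpow p
        _ ≤ (r : ℝ) ^ p := hDcpow p h
        _ ≤ Creal * (r : ℝ) ^ p := le_mul_of_one_le_left (by positivity) hCge1
    · have h1 : ‖D ^ p‖ / (r : ℝ) ^ p ≤ Creal := by
        have h2 : ‖D ^ p‖ / (r : ℝ) ^ p ≤ ∑ j ∈ Finset.range P, ‖D ^ j‖ / (r : ℝ) ^ j :=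
          Finset.single_le_sum (f := fun j => ‖D ^ j‖ / (r : ℝ) ^ j)
            (fun j _ => by positivity) (Finset.mem_range.mpr h)
        simp only [hCdef]; linarith
      exact (div_le_iff₀ (by positivity)).mp h1
  refine ⟨Creal, r, hCge1, hr0, hr1, fun p v => ?_⟩
  calc ‖(D ^ p).mulVec v‖ ≤ ‖D ^ p‖ * ‖v‖ := Matrix.linfty_opNorm_mulVec _ _
    _ ≤ Creal * (r : ℝ) ^ p * ‖v‖ :=
      mul_le_mul_of_nonneg_right (hDpow p) (norm_nonneg v)

end SpectralAux

lemma fcs_exists_adapted (n : ℕ) (D : Matrix (Fin n) (Fin n) ℝ)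
    (hspec : ∀ μ ∈ spectrum ℂ (D.map Complex.ofReal), ‖μ‖ < 1) :
    ∃ (s C : ℝ) (ν : (Fin n → ℝ) → ℝ), 0 < s ∧ s < 1 ∧ 1 ≤ C ∧
      (∀ v, ‖v‖ ≤ ν v) ∧ (∀ v, ν v ≤ C * ‖v‖) ∧
      (∀ u v, ν (u + v) ≤ ν u + ν v) ∧ (∀ v, ν (D.mulVec v) ≤ s * ν v) := by
  obtain ⟨C, r, hC1, hr0, hr1, hbound⟩ := fcs_exists_geom_bound n D hspec
  have hC0 : 0 < C := lt_of_lt_of_le one_pos hC1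
  set s : ℝ := (1 + r) / 2 with hsdef
  have hs0 : 0 < s := by positivity
  have hrs : r < s := by simp only [hsdef]; linarith
  have hs1 : s < 1 := by simp only [hsdef]; linarith
  clear_value s
  have hrs1 : r / s < 1 := (div_lt_one hs0).mpr hrs
  have hrs0 : 0 ≤ r / s := by positivity
  obtain ⟨N, hN⟩ := exists_pow_lt_of_lt_one (show (0:ℝ) < 1 / C by positivity) hrs1
  have hkey : ∀ m : ℕ, N ≤ m → C * (r / s) ^ m ≤ 1 := by
    intro m hm
    have h1 : (r / s) ^ m ≤ (r / s) ^ N := pow_le_pow_of_le_one hrs0 hrs1.le hm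
    have h2 : C * (r / s) ^ m ≤ C * (r / s) ^ N := by nlinarith
    have h3 : C * (r / s) ^ N < C * (1 / C) := by nlinarith
    rw [mul_one_div, div_self (ne_of_gt hC0)] at h3
    linarith
  have hne : (Finset.range (N + 1)).Nonempty := Finset.nonempty_range_add_one
  set ν : (Fin n → ℝ) → ℝ :=
    fun v => (Finset.range (N + 1)).sup' hne fun p => (s ^ p)⁻¹ * ‖(D ^ p).mulVec v‖ with hν
  have hterm_le : ∀ (v : Fin n → ℝ) (p : ℕ), p ∈ Finset.range (N + 1) →
      (s ^ p)⁻¹ * ‖(D ^ p).mulVec v‖ ≤ ν v := by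
    intro v p hp
    exact Finset.le_sup' (fun p => (s ^ p)⁻¹ * ‖(D ^ p).mulVec v‖) hp
  have hlow : ∀ v : Fin n → ℝ, ‖v‖ ≤ ν v := by
    intro v
    have := hterm_le v 0 (by simp)
    simpa [Matrix.one_mulVec] using this
  have hupp : ∀ v : Fin n → ℝ, ν v ≤ C * ‖v‖ := by
    intro v
    apply Finset.sup'_le
    intro p _
    have h1 : ‖(D ^ p).mulVec v‖ ≤ C * r ^ p * ‖v‖ := hbound p v
    have h2 : (s ^ p)⁻¹ * ‖(D ^ p).mulVec v‖ ≤ (s ^ p)⁻¹ * (C * r ^ p * ‖v‖) := by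
      apply mul_le_mul_of_nonneg_left h1 (by positivity)
    have h3 : (s ^ p)⁻¹ * (C * r ^ p * ‖v‖) = C * (r / s) ^ p * ‖v‖ := by
      rw [div_pow]; field_simp
    have h4 : (r / s) ^ p ≤ 1 := pow_le_one₀ hrs0 hrs1.le
    have h5 : C * (r / s) ^ p * ‖v‖ ≤ C * 1 * ‖v‖ := by
      apply mul_le_mul_of_nonneg_right _ (norm_nonneg v)
      nlinarith
    calc (s ^ p)⁻¹ * ‖(D ^ p).mulVec v‖ ≤ C * (r / s) ^ p * ‖v‖ := by rw [← h3]; exact h2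
      _ ≤ C * 1 * ‖v‖ := h5
      _ = C * ‖v‖ := by ring
  refine ⟨s, C, ν, hs0, hs1, hC1, hlow, hupp, ?_, ?_⟩
  · intro u v
    apply Finset.sup'_le
    intro p hp
    have h1 : (D ^ p).mulVec (u + v) = (D ^ p).mulVec u + (D ^ p).mulVec v :=
      Matrix.mulVec_add _ _ _
    calc (s ^ p)⁻¹ * ‖(D ^ p).mulVec (u + v)‖
        ≤ (s ^ p)⁻¹ * (‖(D ^ p).mulVec u‖ + ‖(D ^ p).mulVec v‖) := by
          apply mul_le_mul_of_nonneg_left _ (by positivity)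
          rw [h1]; exact norm_add_le _ _
      _ = (s ^ p)⁻¹ * ‖(D ^ p).mulVec u‖ + (s ^ p)⁻¹ * ‖(D ^ p).mulVec v‖ := by ring
      _ ≤ ν u + ν v := add_le_add (hterm_le u p hp) (hterm_le v p hp)
  · intro v
    apply Finset.sup'_le
    intro p hp
    have hps : (D ^ p).mulVec (D.mulVec v) = (D ^ (p + 1)).mulVec v := by
      rw [Matrix.mulVec_mulVec, ← pow_succ]
    rw [hps]
    rcases Finset.mem_range_succ_iff.mp hp |>.lt_or_eq with h | h
    · have hmem : p + 1 ∈ Finset.range (N + 1) := Finset.mem_range_succ_iff.mpr h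
      have h1 : (s ^ (p+1))⁻¹ * ‖(D ^ (p+1)).mulVec v‖ ≤ ν v := hterm_le v (p+1) hmem
      have h2 : (s ^ p)⁻¹ * ‖(D ^ (p+1)).mulVec v‖
          = s * ((s ^ (p+1))⁻¹ * ‖(D ^ (p+1)).mulVec v‖) := by
        rw [pow_succ]; field_simp; ring
      rw [h2]
      exact mul_le_mul_of_nonneg_left h1 hs0.le
    · subst h
      have h1 : ‖(D ^ (p+1)).mulVec v‖ ≤ C * r ^ (p+1) * ‖v‖ := hbound (p+1) v
      have h2 : (s ^ p)⁻¹ * (C * r ^ (p+1) * ‖v‖) = s * (C * (r / s) ^ (p+1)) * ‖v‖ := by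
        rw [div_pow]; field_simp; ring
      have h3 : C * (r / s) ^ (p + 1) ≤ 1 := hkey (p+1) (Nat.le_succ p)
      calc (s ^ p)⁻¹ * ‖(D ^ (p+1)).mulVec v‖ ≤ (s ^ p)⁻¹ * (C * r ^ (p+1) * ‖v‖) :=
            mul_le_mul_of_nonneg_left h1 (by positivity)
        _ = s * (C * (r / s) ^ (p+1)) * ‖v‖ := h2
        _ ≤ s * 1 * ‖v‖ := by
            apply mul_le_mul_of_nonneg_right _ (norm_nonneg v)
            nlinarith
        _ = s * ‖v‖ := by ring
        _ ≤ s * ν v := mul_le_mul_of_nonneg_left (hlow v) hs0.le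

lemma fcs_contOn_mulVec {n : ℕ} {A : ℝ → Matrix (Fin n) (Fin n) ℝ} {v : ℝ → Fin n → ℝ}
    {s : Set ℝ} (hA : ContinuousOn A s) (hv : ContinuousOn v s) :
    ContinuousOn (fun x => (A x).mulVec (v x)) s := by
  rw [continuousOn_iff_continuous_restrict] at *
  exact hA.matrix_mulVec hv

/-- **Lemma on FCS / uniform convergence.** If the spectral radius of `D` is
less than one and the increments of the sequence `f_k` satisfy
`f_{k+2} - f_{k+1} = D (f_{k+1} - f_k) + ∫₀ᵗ Φ(t-τ)(f_{k+1} - f_k)(τ) dτ` on `[0,T]`,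
then `f_k` converges uniformly on `[0,T]` to some continuous function `f_∞`. -/
theorem fcs_uniform_convergence
    (T : ℝ) (hT : 0 < T) (n : ℕ)
    (D : Matrix (Fin n) (Fin n) ℝ)
    (hspec : ∀ μ ∈ spectrum ℂ (D.map Complex.ofReal), ‖μ‖ < 1)
    (Φ : ℝ → Matrix (Fin n) (Fin n) ℝ)
    (hΦcont : ContinuousOn Φ (Icc 0 T))
    (f : ℕ → ℝ → (Fin n → ℝ))
    (hfcont : ∀ k, ContinuousOn (f k) (Icc 0 T))
    (hrec : ∀ k : ℕ, ∀ t ∈ Icc (0:ℝ) T,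
      f (k + 2) t - f (k + 1) t =
        D.mulVec (f (k + 1) t - f k t) +
          ∫ τ in (0:ℝ)..t, (Φ (t - τ)).mulVec (f (k + 1) τ - f k τ)) :
    ∃ finf : ℝ → (Fin n → ℝ), ContinuousOn finf (Icc 0 T) ∧
      TendstoUniformlyOn f finf atTop (Icc 0 T) := by
  classical
  obtain ⟨s, C, ν, hs0, hs1, hC1, hν1, hν2, hνadd, hνD⟩ := fcs_exists_adapted n D hspec
  have hC0 : (0:ℝ) < C := lt_of_lt_of_le one_pos hC1
  -- bound on Φ as an operator
  set Ψ : ℝ → ℝ := fun x => ∑ i, ∑ j, |Φ x i j| with hΨ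
  have hΨcont : ContinuousOn Ψ (Icc 0 T) := by
    apply continuousOn_finset_sum
    intro i _
    apply continuousOn_finset_sum
    intro j _
    exact (((continuous_apply j).comp (continuous_apply i)).comp_continuousOn hΦcont).abs
  obtain ⟨M₀, hM₀⟩ := isCompact_Icc.exists_bound_of_continuousOn hΨcont
  have hM₀0 : 0 ≤ M₀ := le_trans (norm_nonneg _) (hM₀ 0 ⟨le_refl 0, hT.le⟩)
  have hΨle : ∀ x ∈ Icc (0:ℝ) T, Ψ x ≤ M₀ := fun x hx =>
    (le_abs_self _).trans (by simpa [Real.norm_eq_abs] using hM₀ x hx)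
  have hΦb : ∀ x ∈ Icc (0:ℝ) T, ∀ v : Fin n → ℝ, ‖(Φ x).mulVec v‖ ≤ M₀ * ‖v‖ := by
    intro x hx v
    rw [pi_norm_le_iff_of_nonneg (by positivity)]
    intro i
    rw [Real.norm_eq_abs]
    have h1 : |((Φ x).mulVec v) i| ≤ (∑ j, |Φ x i j|) * ‖v‖ := by
      calc |((Φ x).mulVec v) i| = |∑ j, Φ x i j * v j| := by
            simp [Matrix.mulVec, dotProduct]
        _ ≤ ∑ j, |Φ x i j * v j| := Finset.abs_sum_le_sum_abs _ _
        _ ≤ ∑ j, |Φ x i j| * ‖v‖ := by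
            apply Finset.sum_le_sum
            intro j _
            rw [abs_mul]
            exact mul_le_mul_of_nonneg_left
              (by simpa [Real.norm_eq_abs] using norm_le_pi_norm v j) (abs_nonneg _)
        _ = (∑ j, |Φ x i j|) * ‖v‖ := (Finset.sum_mul _ _ _).symm
    have h2 : ∑ j, |Φ x i j| ≤ Ψ x :=
      Finset.single_le_sum (f := fun i => ∑ j, |Φ x i j|)
        (fun i _ => Finset.sum_nonneg fun j _ => abs_nonneg _) (Finset.mem_univ i)
    calc |((Φ x).mulVec v) i| ≤ (∑ j, |Φ x i j|) * ‖v‖ := h1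
      _ ≤ M₀ * ‖v‖ := mul_le_mul_of_nonneg_right (h2.trans (hΨle x hx)) (norm_nonneg v)
  -- initial bound
  obtain ⟨B₀, hB₀⟩ := isCompact_Icc.exists_bound_of_continuousOn ((hfcont 1).sub (hfcont 0))
  set B : ℝ := C * max B₀ 0 with hB
  have hBnn : 0 ≤ B := mul_nonneg hC0.le (le_max_right _ _)
  have h1s : 0 < 1 - s := by linarith
  set lam : ℝ := 2 * (C * M₀ + 1) / (1 - s) with hlam
  have hCM : 0 ≤ C * M₀ := mul_nonneg hC0.le hM₀0
  have hlam0 : 0 < lam := by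
    apply div_pos _ h1s
    nlinarith
  set q : ℝ := (1 + s) / 2 with hq
  have hq0 : 0 < q := by simp only [hq]; linarith
  have hq1 : q < 1 := by simp only [hq]; linarith
  have hlamkey : C * M₀ / lam ≤ (1 - s) / 2 := by
    rw [div_le_iff₀ hlam0]
    have h2 : (1 - s) / 2 * lam = C * M₀ + 1 := by
      rw [hlam]; field_simp
    linarith
  -- exact exponential integral
  have hexpint : ∀ t : ℝ, ∫ τ in (0:ℝ)..t, Real.exp (lam * τ)
      = (Real.exp (lam * t) - 1) / lam := by
    intro t
    have hder : ∀ x : ℝ, HasDerivAt (fun τ => Real.exp (lam * τ) / lam)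
        (Real.exp (lam * x)) x := by
      intro x
      have h1 : HasDerivAt (fun τ : ℝ => lam * τ) lam x := by
        simpa using (hasDerivAt_id x).const_mul lam
      have h2 := (Real.hasDerivAt_exp (lam * x)).comp x h1
      have h3 := h2.div_const lam
      simpa [mul_div_cancel_right₀ _ (ne_of_gt hlam0)] using h3
    rw [intervalIntegral.integral_eq_sub_of_hasDerivAt (fun x _ => hder x)
      ((Real.continuous_exp.comp (continuous_const.mul continuous_id)).intervalIntegrable _ _)]
    rw [mul_zero, Real.exp_zero]
    ring
  have hνnn : ∀ v, 0 ≤ ν v := fun v => (norm_nonneg v).trans (hν1 v)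
  -- main induction
  have main : ∀ k, ∀ t ∈ Icc (0:ℝ) T,
      ν (f (k + 1) t - f k t) ≤ B * q ^ k * Real.exp (lam * t) := by
    intro k
    induction k with
    | zero =>
      intro t ht
      have h1 : ν (f 1 t - f 0 t) ≤ C * ‖f 1 t - f 0 t‖ := hν2 _
      have h2 : ‖f 1 t - f 0 t‖ ≤ max B₀ 0 := (hB₀ t ht).trans (le_max_left _ _)
      have h3 : (1:ℝ) ≤ Real.exp (lam * t) :=
        Real.one_le_exp (mul_nonneg hlam0.le ht.1)
      have h4 : C * ‖f 1 t - f 0 t‖ ≤ B := by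
        rw [hB]; exact mul_le_mul_of_nonneg_left h2 hC0.le
      calc ν (f 1 t - f 0 t) ≤ B := h1.trans h4
        _ = B * q ^ 0 * 1 := by ring
        _ ≤ B * q ^ 0 * Real.exp (lam * t) := by
            apply mul_le_mul_of_nonneg_left h3
            positivity
    | succ k ih =>
      intro t ht
      obtain ⟨ht0, htT⟩ := ht
      have hrec' : f (k + 1 + 1) t - f (k + 1) t =
          D.mulVec (f (k + 1) t - f k t) +
            ∫ τ in (0:ℝ)..t, (Φ (t - τ)).mulVec (f (k + 1) τ - f k τ) :=
        hrec k t ⟨ht0, htT⟩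
      have hmono : Icc (0:ℝ) t ⊆ Icc 0 T := Icc_subset_Icc le_rfl htT
      have hgkc : ContinuousOn (fun τ => f (k + 1) τ - f k τ) (Icc 0 t) :=
        ((hfcont (k + 1)).sub (hfcont k)).mono hmono
      have hΦc2 : ContinuousOn (fun τ => Φ (t - τ)) (Icc 0 t) := by
        apply hΦcont.comp ((continuous_const.sub continuous_id).continuousOn)
        intro τ hτ
        exact ⟨by simpa using hτ.2, by simp; linarith [hτ.1]⟩
      have hFc : ContinuousOn (fun τ => (Φ (t - τ)).mulVec (f (k + 1) τ - f k τ)) (Icc 0 t) :=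
        fcs_contOn_mulVec hΦc2 hgkc
      have huIcc : uIcc (0:ℝ) t = Icc 0 t := uIcc_of_le ht0
      have hFi : IntervalIntegrable (fun τ => (Φ (t - τ)).mulVec (f (k + 1) τ - f k τ))
          volume 0 t := (hFc.mono huIcc.subset).intervalIntegrable
      have hb : ∀ τ ∈ Icc (0:ℝ) t,
          ‖(Φ (t - τ)).mulVec (f (k + 1) τ - f k τ)‖
            ≤ M₀ * (B * q ^ k) * Real.exp (lam * τ) := by
        intro τ hτ
        have hmem : t - τ ∈ Icc (0:ℝ) T := ⟨by linarith [hτ.2], by linarith [hτ.1]⟩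
        have h1 := hΦb (t - τ) hmem (f (k + 1) τ - f k τ)
        have h2 : ‖f (k + 1) τ - f k τ‖ ≤ B * q ^ k * Real.exp (lam * τ) :=
          (hν1 _).trans (ih τ (hmono hτ))
        calc ‖(Φ (t - τ)).mulVec (f (k + 1) τ - f k τ)‖
            ≤ M₀ * ‖f (k + 1) τ - f k τ‖ := h1
          _ ≤ M₀ * (B * q ^ k * Real.exp (lam * τ)) :=
              mul_le_mul_of_nonneg_left h2 hM₀0
          _ = M₀ * (B * q ^ k) * Real.exp (lam * τ) := by ring
      have hnormint : ‖∫ τ in (0:ℝ)..t, (Φ (t - τ)).mulVec (f (k + 1) τ - f k τ)‖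
          ≤ M₀ * (B * q ^ k) * ((Real.exp (lam * t) - 1) / lam) := by
        calc ‖∫ τ in (0:ℝ)..t, (Φ (t - τ)).mulVec (f (k + 1) τ - f k τ)‖
            ≤ ∫ τ in (0:ℝ)..t, ‖(Φ (t - τ)).mulVec (f (k + 1) τ - f k τ)‖ :=
              intervalIntegral.norm_integral_le_integral_norm ht0
          _ ≤ ∫ τ in (0:ℝ)..t, M₀ * (B * q ^ k) * Real.exp (lam * τ) := by
              apply intervalIntegral.integral_mono_on ht0 hFi.norm
              · exact (continuous_const.mul
                  (Real.continuous_exp.comp (continuous_const.mul continuous_id))).intervalIntegrable _ _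
              · exact hb
          _ = M₀ * (B * q ^ k) * ((Real.exp (lam * t) - 1) / lam) := by
              rw [intervalIntegral.integral_const_mul, hexpint t]
      -- put things together
      set X : ℝ := B * q ^ k with hX
      have hXnn : 0 ≤ X := by positivity
      set E : ℝ := Real.exp (lam * t) with hE
      have hE1 : (1:ℝ) ≤ E := Real.one_le_exp (by positivity)
      have hstep2 : C * (M₀ * X * ((E - 1) / lam)) ≤ (q - s) * (X * E) := by
        have hqs : q - s = (1 - s) / 2 := by simp only [hq]; ring
        have h1 : C * (M₀ * X * ((E - 1) / lam)) = C * M₀ / lam * (X * (E - 1)) := by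
          ring
        have h2 : C * M₀ / lam * (X * (E - 1)) ≤ (1 - s) / 2 * (X * E) := by
          apply mul_le_mul hlamkey _ _ (by linarith)
          · nlinarith
          · nlinarith
        rw [h1, hqs]
        exact h2
      calc ν (f (k + 1 + 1) t - f (k + 1) t)
          = ν (D.mulVec (f (k + 1) t - f k t) +
              ∫ τ in (0:ℝ)..t, (Φ (t - τ)).mulVec (f (k + 1) τ - f k τ)) := by rw [hrec']
        _ ≤ ν (D.mulVec (f (k + 1) t - f k t)) +
              ν (∫ τ in (0:ℝ)..t, (Φ (t - τ)).mulVec (f (k + 1) τ - f k τ)) := hνadd _ _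
        _ ≤ s * ν (f (k + 1) t - f k t) +
              C * ‖∫ τ in (0:ℝ)..t, (Φ (t - τ)).mulVec (f (k + 1) τ - f k τ)‖ :=
            add_le_add (hνD _) (hν2 _)
        _ ≤ s * (X * E) + C * (M₀ * X * ((E - 1) / lam)) := by
            apply add_le_add
            · apply mul_le_mul_of_nonneg_left _ hs0.le
              calc ν (f (k + 1) t - f k t) ≤ B * q ^ k * Real.exp (lam * t) :=
                    ih t ⟨ht0, htT⟩
                _ = X * E := by rw [hX, hE]
            · apply mul_le_mul_of_nonneg_left _ hC0.le
              calc ‖∫ τ in (0:ℝ)..t, (Φ (t - τ)).mulVec (f (k + 1) τ - f k τ)‖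
                  ≤ M₀ * (B * q ^ k) * ((Real.exp (lam * t) - 1) / lam) := hnormint
                _ = M₀ * X * ((E - 1) / lam) := by rw [hX, hE]
        _ ≤ s * (X * E) + (q - s) * (X * E) := by linarith [hstep2]
        _ = q * (X * E) := by ring
        _ = B * q ^ (k + 1) * Real.exp (lam * t) := by rw [hX, hE]; ring
  -- geometric distance bound
  set K : ℝ := B * Real.exp (lam * T) with hK
  have hgeo : ∀ t ∈ Icc (0:ℝ) T, ∀ k, dist (f k t) (f (k + 1) t) ≤ K * q ^ k := by
    intro t ht k
    rw [dist_eq_norm, norm_sub_rev]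
    have h1 : ν (f (k + 1) t - f k t) ≤ B * q ^ k * Real.exp (lam * t) := main k t ht
    have h2 : Real.exp (lam * t) ≤ Real.exp (lam * T) :=
      Real.exp_le_exp.mpr (by nlinarith [ht.1, ht.2, hlam0])
    calc ‖f (k + 1) t - f k t‖ ≤ B * q ^ k * Real.exp (lam * t) := (hν1 _).trans h1
      _ ≤ B * q ^ k * Real.exp (lam * T) := by
          apply mul_le_mul_of_nonneg_left h2
          positivity
      _ = K * q ^ k := by rw [hK]; ring
  set finf : ℝ → Fin n → ℝ := fun t => limUnder atTop (fun k => f k t) with hfinf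
  have htend : ∀ t ∈ Icc (0:ℝ) T, Tendsto (fun k => f k t) atTop (𝓝 (finf t)) := fun t ht =>
    (cauchySeq_of_le_geometric q K hq1 (hgeo t ht)).tendsto_limUnder
  have hdist : ∀ (k : ℕ), ∀ t ∈ Icc (0:ℝ) T, dist (f k t) (finf t) ≤ K * q ^ k / (1 - q) :=
    fun k t ht => dist_le_of_le_geometric_of_tendsto q K hq1 (hgeo t ht) (htend t ht) k
  have htu : TendstoUniformlyOn f finf atTop (Icc 0 T) := by
    rw [Metric.tendstoUniformlyOn_iff]
    intro ε hε
    have hten : Tendsto (fun k : ℕ => K * q ^ k / (1 - q)) atTop (𝓝 0) := by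
      have h1 := (tendsto_pow_atTop_nhds_zero_of_lt_one hq0.le hq1).const_mul K
      simpa using h1.div_const (1 - q)
    filter_upwards [hten.eventually_lt_const hε] with k hk t ht
    calc dist (finf t) (f k t) = dist (f k t) (finf t) := dist_comm _ _
      _ ≤ K * q ^ k / (1 - q) := hdist k t ht
      _ < ε := hk
  exact ⟨finf, htu.continuousOn (Eventually.of_forall hfcont).frequently, htu⟩
end

section
/- Let q ≥ p ≥ 1 and d ∈ ℕ, and let Q be a q×p polynomial matrix over ℝ[X] each of whose entries has degree at most d. Let M be the degree-d coefficient matrix of Q, and assume det(Mᵀ·M) ≠ 0. Then the coefficient of X^{2·d·p} in det(Qᵀ·Q) equals det(Mᵀ·M); in particular det(Qᵀ·Q) is a nonzero polynomial, i.e., the polynomial matrix Qᵀ·Q is nonsingular. -/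
/-!
Every term of the Leibniz expansion of `det (Qᵀ * Q)` is a product of `p` entries of degree at
most `2 * d`, so its coefficient of `X ^ (2 * d * p)` is the determinant of the degree-`2 * d`
coefficient matrix of `Qᵀ * Q`, and that matrix is `Mᵀ * M`.
-/

open Polynomial Matrix

namespace Matrix

variable {R : Type*} [CommRing R] {l m n : Type*}

theorem natDegree_mul_apply_le [Fintype m] {d e : ℕ} {A : Matrix l m R[X]} {B : Matrix m n R[X]}
    (hA : ∀ i j, (A i j).natDegree ≤ d) (hB : ∀ i j, (B i j).natDegree ≤ e) (i : l) (j : n) :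
    ((A * B) i j).natDegree ≤ d + e :=
  natDegree_sum_le_of_forall_le _ _ fun k _ =>
    natDegree_mul_le.trans (add_le_add (hA i k) (hB k j))

theorem map_coeff_mul_of_natDegree_le [Fintype m] {d e : ℕ} {A : Matrix l m R[X]}
    {B : Matrix m n R[X]}
    (hA : ∀ i j, (A i j).natDegree ≤ d) (hB : ∀ i j, (B i j).natDegree ≤ e) :
    (A * B).map (coeff · (d + e)) = A.map (coeff · d) * B.map (coeff · e) := by
  ext i j
  simp only [map_apply, mul_apply, finsetSum_coeff]
  exact Finset.sum_congr rfl fun k _ => coeff_mul_add_eq_of_natDegree_le (hA i k) (hB k j)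

theorem coeff_det_of_natDegree_le [Fintype n] [DecidableEq n] {e : ℕ} {A : Matrix n n R[X]}
    (hA : ∀ i j, (A i j).natDegree ≤ e) :
    A.det.coeff (Fintype.card n * e) = (A.map (coeff · e)).det := by
  simp only [det_apply, finsetSum_coeff, coeff_smul, map_apply]
  refine Finset.sum_congr rfl fun σ _ => congrArg _ ?_
  simpa using coeff_prod_of_natDegree_le Finset.univ (fun i => A (σ i) i) e fun i _ => hA _ _

end Matrix

theorem det_transpose_mul_self_nonsingular_general
    (p q : ℕ) (d : ℕ)
    (Q : Matrix (Fin q) (Fin p) ℝ[X])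
    (hdeg : ∀ i j, (Q i j).degree ≤ d)
    (M : Matrix (Fin q) (Fin p) ℝ)
    (hM : ∀ i j, M i j = (Q i j).coeff d)
    (hMdet : (Mᵀ * M).det ≠ 0) :
    (Qᵀ * Q).det.coeff (2 * d * p) = (Mᵀ * M).det ∧ (Qᵀ * Q).det ≠ 0 := by
  have hQ : ∀ i j, (Q i j).natDegree ≤ d := fun i j => natDegree_le_of_degree_le (hdeg i j)
  have hQt : ∀ i j, (Qᵀ i j).natDegree ≤ d := fun i j => hQ j i
  have hQM : Q.map (coeff · d) = M := Matrix.ext fun i j => (hM i j).symm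
  have hcoeff : (Qᵀ * Q).det.coeff (2 * d * p) = (Mᵀ * M).det := by
    have h := coeff_det_of_natDegree_le (natDegree_mul_apply_le hQt hQ)
    rw [Fintype.card_fin, map_coeff_mul_of_natDegree_le hQt hQ, transpose_map, hQM] at h
    rw [← h, mul_comm, two_mul]
  refine ⟨hcoeff, fun h => hMdet ?_⟩
  rw [← hcoeff, h, coeff_zero]

/-- **nonsingularity of `Qᵀ·Q`, cf. Lemma 4.** If every entry of the `q × p`
polynomial matrix `Q` (with `q ≥ p ≥ 1`) has degree at most `d` and the degree-`d`
coefficient matrix `M` satisfies `det (Mᵀ·M) ≠ 0`, then the coefficient of `X^(2·d·p)` in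
`det (Qᵀ·Q)` equals `det (Mᵀ·M)`; in particular `det (Qᵀ·Q)` is a nonzero polynomial,
i.e., `Qᵀ·Q` is nonsingular. -/
theorem det_transpose_mul_self_nonsingular
    (p q : ℕ) (hp : 1 ≤ p) (hpq : p ≤ q) (d : ℕ)
    (Q : Matrix (Fin q) (Fin p) ℝ[X])
    (hdeg : ∀ i j, (Q i j).degree ≤ d)
    (M : Matrix (Fin q) (Fin p) ℝ)
    (hM : ∀ i j, M i j = (Q i j).coeff d)
    (hMdet : (Mᵀ * M).det ≠ 0) :
    (Qᵀ * Q).det.coeff (2 * d * p) = (Mᵀ * M).det ∧ (Qᵀ * Q).det ≠ 0 :=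
  det_transpose_mul_self_nonsingular_general p q d Q hdeg M hM hMdet
end

section
/- Assume the linear map x ↦ (C·B)·x from ℝ^p to ℝ^q is injective (C·B has full column rank). If u, v : [0,T] → ℝ^p are continuous and ∫₀ᵗ C·exp((t−τ)A)·B·u(τ) dτ = ∫₀ᵗ C·exp((t−τ)A)·B·v(τ) dτ for all t ∈ [0,T], then u(t) = v(t) for all t ∈ [0,T]. Consequently, any trackable trajectory is generated by exactly one continuous input, i.e., trackability coincides with realizability. -/
open MeasureTheory Set
open NormedSpace

theorem contOn_mulVec {m k : ℕ} {M : ℝ → Matrix (Fin m) (Fin k) ℝ} {f : ℝ → Fin k → ℝ}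
    {s : Set ℝ} (hM : Continuous M) (hf : ContinuousOn f s) :
    ContinuousOn (fun τ => (M τ).mulVec (f τ)) s := by
  apply continuousOn_pi.mpr
  intro i
  simp only [Matrix.mulVec, dotProduct]
  apply continuousOn_finset_sum
  intro j _
  exact (((continuous_apply j).comp ((continuous_apply i).comp hM)).continuousOn).mul
    ((continuous_apply j).comp_continuousOn hf)

theorem cont_mulVec {m k : ℕ} {M : ℝ → Matrix (Fin m) (Fin k) ℝ} {f : ℝ → Fin k → ℝ}
    (hM : Continuous M) (hf : Continuous f) :
    Continuous (fun τ => (M τ).mulVec (f τ)) :=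
  continuousOn_univ.mp (contOn_mulVec hM hf.continuousOn)

section aux
attribute [local instance] Matrix.linftyOpNormedAddCommGroup Matrix.linftyOpNormedRing
  Matrix.linftyOpNormedSpace Matrix.linftyOpNormedAlgebra

theorem myexp_cont {n : ℕ} (A : Matrix (Fin n) (Fin n) ℝ) :
    Continuous fun t : ℝ => NormedSpace.exp (t • A) :=
  exp_continuous.comp (continuous_id.smul continuous_const)

theorem myexp_add {n : ℕ} (A : Matrix (Fin n) (Fin n) ℝ) (s t : ℝ) :
    NormedSpace.exp ((s + t) • A) = NormedSpace.exp (s • A) * NormedSpace.exp (t • A) := by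
  rw [add_smul]
  exact NormedSpace.exp_add_of_commute (((Commute.refl A).smul_left s).smul_right t)

theorem myexp_inv {n : ℕ} (A : Matrix (Fin n) (Fin n) ℝ) (t : ℝ) :
    NormedSpace.exp (t • A) * NormedSpace.exp ((-t) • A) = 1 := by
  rw [← myexp_add A t (-t)]
  simp [NormedSpace.exp_zero]

theorem key {n p q : ℕ} (T : ℝ) (hT : 0 < T)
    (A : Matrix (Fin n) (Fin n) ℝ) (B : Matrix (Fin n) (Fin p) ℝ)
    (C : Matrix (Fin q) (Fin n) ℝ)
    (hCB : Function.Injective fun x : Fin p → ℝ => (C * B).mulVec x)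
    (d : ℝ → Fin p → ℝ) (hd : Continuous d)
    (hz : ∀ t ∈ Icc (0:ℝ) T,
      (∫ τ in (0:ℝ)..t, C.mulVec ((NormedSpace.exp ((t - τ) • A)).mulVec (B.mulVec (d τ)))) = 0) :
    ∀ t ∈ Icc (0:ℝ) T, d t = 0 := by
  classical
  set g : ℝ → Fin n → ℝ := fun τ => (NormedSpace.exp ((-τ) • A)).mulVec (B.mulVec (d τ)) with hg_def
  have hg_cont : Continuous g :=
    cont_mulVec ((myexp_cont A).comp continuous_neg) (cont_mulVec continuous_const hd)
  set F : ℝ → Fin n → ℝ := fun t => ∫ τ in (0:ℝ)..t, g τ with hF_def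
  have hF_deriv : ∀ t : ℝ, HasDerivAt F (g t) t := fun t =>
    intervalIntegral.integral_hasDerivAt_right (hg_cont.intervalIntegrable 0 t)
      (hg_cont.stronglyMeasurableAtFilter _ _) hg_cont.continuousAt
  set G : ℝ → Fin n → ℝ := fun t => (NormedSpace.exp (t • A)).mulVec (F t) with hG_def
  -- bilinear continuous-linear-map version of mulVec
  set φ : Matrix (Fin n) (Fin n) ℝ →ₗ[ℝ] (Fin n → ℝ) →L[ℝ] (Fin n → ℝ) :=
    { toFun := fun M => LinearMap.toContinuousLinearMap M.mulVecLin
      map_add' := by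
        intro M N; ext x; simp [Matrix.add_mulVec]
      map_smul' := by
        intro c M; ext x; simp [Matrix.smul_mulVec] } with hφ_def
  set φc := LinearMap.toContinuousLinearMap φ with hφc_def
  have hφc_apply : ∀ (M : Matrix (Fin n) (Fin n) ℝ) (x : Fin n → ℝ), φc M x = M.mulVec x :=
    fun M x => rfl
  have hG_deriv : ∀ t : ℝ, HasDerivAt G (A.mulVec (G t) + B.mulVec (d t)) t := by
    intro t
    have hc : HasDerivAt (fun s : ℝ => φc (NormedSpace.exp (s • A)))
        (φc (A * NormedSpace.exp (t • A))) t :=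
      φc.hasFDerivAt.comp_hasDerivAt t (hasDerivAt_exp_smul_const' A t)
    have h1 := hc.clm_apply (hF_deriv t)
    have e1 : (fun s : ℝ => φc (NormedSpace.exp (s • A)) (F s)) = G := rfl
    rw [e1] at h1
    refine h1.congr_deriv ?_
    symm
    rw [hφc_apply, hφc_apply]
    rw [← Matrix.mulVec_mulVec, hg_def]
    simp only []
    rw [Matrix.mulVec_mulVec (B.mulVec (d t)) (NormedSpace.exp (t • A)), myexp_inv,
      Matrix.one_mulVec, hG_def]
  -- C applied to G vanishes on Icc
  have hCG : ∀ t ∈ Icc (0:ℝ) T, C.mulVec (G t) = 0 := by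
    intro t ht
    have hint : IntervalIntegrable g volume 0 t := hg_cont.intervalIntegrable 0 t
    have step1 : C.mulVec (G t) =
        LinearMap.toContinuousLinearMap (C * NormedSpace.exp (t • A)).mulVecLin (∫ τ in (0:ℝ)..t, g τ) := by
      show C.mulVec (G t) = (C * NormedSpace.exp (t • A)).mulVec (F t)
      rw [hG_def]
      simp only []
      rw [Matrix.mulVec_mulVec]
    rw [step1, ← ContinuousLinearMap.intervalIntegral_comp_comm _ hint]
    rw [← hz t ht]
    apply intervalIntegral.integral_congr
    intro τ _
    show (C * NormedSpace.exp (t • A)).mulVec (g τ) = _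
    rw [hg_def]
    simp only []
    rw [sub_eq_add_neg, myexp_add]
    simp only [Matrix.mulVec_mulVec, Matrix.mul_assoc]
  -- therefore (C*B) d = -(C*A) G on Ico
  have hkey : ∀ t ∈ Ico (0:ℝ) T, (C * B).mulVec (d t) = -((C * A).mulVec (G t)) := by
    intro t ht
    have ht' : t ∈ Icc (0:ℝ) T := Ico_subset_Icc_self ht
    have hU : UniqueDiffWithinAt ℝ (Icc (0:ℝ) T) t := (uniqueDiffOn_Icc hT) t ht'
    have e1 : HasDerivWithinAt (fun s => C.mulVec (G s))
        (C.mulVec (A.mulVec (G t) + B.mulVec (d t))) (Icc (0:ℝ) T) t :=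
      ((LinearMap.toContinuousLinearMap C.mulVecLin).hasFDerivAt.comp_hasDerivAt t
        (hG_deriv t)).hasDerivWithinAt
    have e2 : HasDerivWithinAt (fun s => C.mulVec (G s)) 0 (Icc (0:ℝ) T) t :=
      (hasDerivWithinAt_const t _ (0 : Fin q → ℝ)).congr (fun s hs => hCG s hs) (hCG t ht')
    have e3 : C.mulVec (A.mulVec (G t) + B.mulVec (d t)) = 0 :=
      (e1.derivWithin hU).symm.trans (e2.derivWithin hU)
    have h5 := Matrix.mulVec_mulVec (G t) C A
    have h6 := Matrix.mulVec_mulVec (d t) C B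
    have e4 : (C * A).mulVec (G t) + (C * B).mulVec (d t) = 0 :=
      (congrArg₂ (· + ·) h5.symm h6.symm).trans ((Matrix.mulVec_add _ _ _).symm.trans e3)
    exact eq_neg_of_add_eq_zero_right e4
  -- left inverse of (C*B)
  have hker : LinearMap.ker (C * B).mulVecLin = ⊥ := LinearMap.ker_eq_bot.mpr hCB
  obtain ⟨L, hL⟩ := (C * B).mulVecLin.exists_leftInverse_of_injective hker
  set Φ : (Fin n → ℝ) →L[ℝ] (Fin p → ℝ) :=
    LinearMap.toContinuousLinearMap (L.comp (C * A).mulVecLin) with hΦ_def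
  have hdt : ∀ t ∈ Ico (0:ℝ) T, d t = -(Φ (G t)) := by
    intro t ht
    have h1 : d t = L ((C * B).mulVec (d t)) := by
      have h2 := congrFun (congrArg DFunLike.coe hL) (d t)
      simpa using h2.symm
    rw [h1, hkey t ht, map_neg]
    rfl
  have hnorm_d : ∀ t ∈ Ico (0:ℝ) T, ‖d t‖ ≤ ‖Φ‖ * ‖G t‖ := by
    intro t ht
    rw [hdt t ht, norm_neg]
    exact Φ.le_opNorm _
  set Ac := LinearMap.toContinuousLinearMap A.mulVecLin with hAc_def
  set Bc := LinearMap.toContinuousLinearMap B.mulVecLin with hBc_def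
  set K : ℝ := ‖Ac‖ + ‖Bc‖ * ‖Φ‖ with hK_def
  have hbound : ∀ t ∈ Ico (0:ℝ) T,
      ‖A.mulVec (G t) + B.mulVec (d t)‖ ≤ K * ‖G t‖ + 0 := by
    intro t ht
    calc ‖A.mulVec (G t) + B.mulVec (d t)‖ ≤ ‖A.mulVec (G t)‖ + ‖B.mulVec (d t)‖ :=
          norm_add_le _ _
      _ ≤ ‖Ac‖ * ‖G t‖ + ‖Bc‖ * ‖d t‖ := add_le_add (Ac.le_opNorm _) (Bc.le_opNorm _)
      _ ≤ ‖Ac‖ * ‖G t‖ + ‖Bc‖ * (‖Φ‖ * ‖G t‖) := by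
          have := mul_le_mul_of_nonneg_left (hnorm_d t ht) (norm_nonneg Bc)
          linarith
      _ = K * ‖G t‖ + 0 := by rw [hK_def]; ring
  have hG_cont : Continuous G := continuous_iff_continuousAt.mpr fun t => (hG_deriv t).continuousAt
  have hG0 : G 0 = 0 := by
    show (NormedSpace.exp ((0:ℝ) • A)).mulVec (∫ τ in (0:ℝ)..(0:ℝ), g τ) = 0
    rw [intervalIntegral.integral_same, Matrix.mulVec_zero]
  have hGron := norm_le_gronwallBound_of_norm_deriv_right_le (f := G)
    (f' := fun t => A.mulVec (G t) + B.mulVec (d t)) (δ := 0) (K := K) (ε := 0) (a := 0) (b := T)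
    hG_cont.continuousOn (fun t _ => (hG_deriv t).hasDerivWithinAt)
    (by rw [hG0]; simp) hbound
  have hGzero : ∀ t ∈ Icc (0:ℝ) T, G t = 0 := by
    intro t ht
    have h7 := hGron t ht
    rw [gronwallBound_ε0_δ0] at h7
    exact norm_le_zero_iff.mp (by simpa using h7)
  have hIco : EqOn d 0 (Ico (0:ℝ) T) := by
    intro t ht
    rw [hdt t ht, hGzero t (Ico_subset_Icc_self ht), map_zero, neg_zero]
    rfl
  have hclo : EqOn d 0 (closure (Ico (0:ℝ) T)) := hIco.closure hd continuous_const
  rw [closure_Ico hT.ne] at hclo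
  intro t ht
  exact hclo ht

end aux

/-- If `C·B` has full column rank, then two continuous inputs producing the
same forced response `∫₀ᵗ C·exp((t−τ)A)·B·u(τ) dτ` on `[0,T]` coincide on `[0,T]`;
consequently any trackable trajectory is generated by exactly one continuous input
(trackability coincides with realizability). -/
theorem input_uniqueness_of_full_column_rank
    (T : ℝ) (hT : 0 < T) (n p q : ℕ)
    (A : Matrix (Fin n) (Fin n) ℝ) (B : Matrix (Fin n) (Fin p) ℝ)
    (C : Matrix (Fin q) (Fin n) ℝ) (x₀ : Fin n → ℝ)
    (w : ℝ → Fin n → ℝ) (hw : ContinuousOn w (Icc 0 T))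
    (hCB : Function.Injective fun x : Fin p → ℝ => (C * B).mulVec x) :
    (∀ u v : ℝ → Fin p → ℝ, ContinuousOn u (Icc 0 T) → ContinuousOn v (Icc 0 T) →
      (∀ t ∈ Icc (0:ℝ) T,
        (∫ τ in (0:ℝ)..t, C.mulVec ((NormedSpace.exp ((t - τ) • A)).mulVec (B.mulVec (u τ)))) =
          ∫ τ in (0:ℝ)..t, C.mulVec ((NormedSpace.exp ((t - τ) • A)).mulVec (B.mulVec (v τ)))) →
      ∀ t ∈ Icc (0:ℝ) T, u t = v t) ∧
    (∀ yd : ℝ → Fin q → ℝ, ∀ u₁ u₂ : ℝ → Fin p → ℝ,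
      ContinuousOn u₁ (Icc 0 T) → ContinuousOn u₂ (Icc 0 T) →
      (∀ t ∈ Icc (0:ℝ) T,
        C.mulVec ((NormedSpace.exp (t • A)).mulVec x₀) +
          (∫ τ in (0:ℝ)..t,
            C.mulVec ((NormedSpace.exp ((t - τ) • A)).mulVec (B.mulVec (u₁ τ) + w τ))) = yd t) →
      (∀ t ∈ Icc (0:ℝ) T,
        C.mulVec ((NormedSpace.exp (t • A)).mulVec x₀) +
          (∫ τ in (0:ℝ)..t,
            C.mulVec ((NormedSpace.exp ((t - τ) • A)).mulVec (B.mulVec (u₂ τ) + w τ))) = yd t) →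
      ∀ t ∈ Icc (0:ℝ) T, u₁ t = u₂ t) := by
  have h0T : (0:ℝ) ≤ T := hT.le
  -- continuity of the integrand pieces
  have hexp : ∀ t : ℝ, Continuous fun τ : ℝ => NormedSpace.exp ((t - τ) • A) := fun t =>
    (myexp_cont A).comp (continuous_const.sub continuous_id)
  have hint : ∀ (f : ℝ → Fin p → ℝ), ContinuousOn f (Icc 0 T) → ∀ t ∈ Icc (0:ℝ) T,
      IntervalIntegrable
        (fun τ => C.mulVec ((NormedSpace.exp ((t - τ) • A)).mulVec (B.mulVec (f τ))))
        volume 0 t := by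
    intro f hf t ht
    have hsub : uIcc (0:ℝ) t ⊆ Icc (0:ℝ) T := by
      rw [uIcc_of_le ht.1]; exact Icc_subset_Icc le_rfl ht.2
    exact (contOn_mulVec continuous_const (contOn_mulVec (hexp t)
      (contOn_mulVec continuous_const (hf.mono hsub)))).intervalIntegrable
  have main : ∀ u v : ℝ → Fin p → ℝ, ContinuousOn u (Icc 0 T) → ContinuousOn v (Icc 0 T) →
      (∀ t ∈ Icc (0:ℝ) T,
        (∫ τ in (0:ℝ)..t, C.mulVec ((NormedSpace.exp ((t - τ) • A)).mulVec (B.mulVec (u τ)))) =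
          ∫ τ in (0:ℝ)..t, C.mulVec ((NormedSpace.exp ((t - τ) • A)).mulVec (B.mulVec (v τ)))) →
      ∀ t ∈ Icc (0:ℝ) T, u t = v t := by
    intro u v hu hv huv
    set d : ℝ → Fin p → ℝ := IccExtend h0T (fun τ : Icc (0:ℝ) T => u τ - v τ) with hd_def
    have hd_cont : Continuous d := (hu.sub hv).restrict.Icc_extend'
    have hd_eq : ∀ τ ∈ Icc (0:ℝ) T, d τ = u τ - v τ := fun τ hτ => by
      rw [hd_def, IccExtend_of_mem h0T _ hτ]
    have hz : ∀ t ∈ Icc (0:ℝ) T,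
        (∫ τ in (0:ℝ)..t,
          C.mulVec ((NormedSpace.exp ((t - τ) • A)).mulVec (B.mulVec (d τ)))) = 0 := by
      intro t ht
      have hsub : uIcc (0:ℝ) t ⊆ Icc (0:ℝ) T := by
        rw [uIcc_of_le ht.1]; exact Icc_subset_Icc le_rfl ht.2
      have heq : (∫ τ in (0:ℝ)..t,
            C.mulVec ((NormedSpace.exp ((t - τ) • A)).mulVec (B.mulVec (d τ)))) =
          ∫ τ in (0:ℝ)..t,
            (C.mulVec ((NormedSpace.exp ((t - τ) • A)).mulVec (B.mulVec (u τ))) -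
             C.mulVec ((NormedSpace.exp ((t - τ) • A)).mulVec (B.mulVec (v τ)))) := by
        apply intervalIntegral.integral_congr
        intro τ hτ
        simp only [hd_eq τ (hsub hτ), Matrix.mulVec_sub]
      rw [heq, intervalIntegral.integral_sub (hint u hu t ht) (hint v hv t ht), huv t ht,
        sub_self]
    have hconc := key T hT A B C hCB d hd_cont hz
    intro t ht
    have h8 := hconc t ht
    rw [hd_eq t ht] at h8
    exact sub_eq_zero.mp h8
  refine ⟨main, ?_⟩
  intro yd u₁ u₂ hu1 hu2 hy1 hy2
  apply main u₁ u₂ hu1 hu2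
  intro t ht
  have hsub : uIcc (0:ℝ) t ⊆ Icc (0:ℝ) T := by
    rw [uIcc_of_le ht.1]; exact Icc_subset_Icc le_rfl ht.2
  have hintw : IntervalIntegrable
      (fun τ => C.mulVec ((NormedSpace.exp ((t - τ) • A)).mulVec (w τ))) volume 0 t :=
    (contOn_mulVec continuous_const (contOn_mulVec (hexp t) (hw.mono hsub))).intervalIntegrable
  have hsplit : ∀ (f : ℝ → Fin p → ℝ), ContinuousOn f (Icc 0 T) →
      (∫ τ in (0:ℝ)..t,
        C.mulVec ((NormedSpace.exp ((t - τ) • A)).mulVec (B.mulVec (f τ) + w τ))) =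
      (∫ τ in (0:ℝ)..t,
        C.mulVec ((NormedSpace.exp ((t - τ) • A)).mulVec (B.mulVec (f τ)))) +
      ∫ τ in (0:ℝ)..t, C.mulVec ((NormedSpace.exp ((t - τ) • A)).mulVec (w τ)) := by
    intro f hf
    rw [← intervalIntegral.integral_add (hint f hf t ht) hintw]
    apply intervalIntegral.integral_congr
    intro τ _
    simp only [Matrix.mulVec_add]
  have h9 := (hy1 t ht).trans (hy2 t ht).symm
  have h10 := add_left_cancel h9
  rw [hsplit u₁ hu1, hsplit u₂ hu2] at h10
  exact add_right_cancel h10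
end

section
/- Assume the linear map x ↦ (C·B)·x from ℝ^p to ℝ^q is surjective (C·B has full row rank). Let y_d : [0,T] → ℝ^q be continuously differentiable with y_d(0) = C·x₀. Then y_d is trackable: there exists a continuous u : [0,T] → ℝ^p such that y(u)(t) = y_d(t) for all t ∈ [0,T]. -/
/-!
Pick a right inverse `K` of `C * B` and close the loop with the feedback
`u = K (ẏ_d - C A x - C w)`. The closed-loop system is again linear, so variation of constants
gives a solution `x` with `x 0 = x₀`. Along it `(C x)' = C A x + C B u + C w = ẏ_d`, and
`C x 0 = y_d 0`, so `C x = y_d` on `[0, T]`. Duhamel's formula identifies `C x t` with the output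
of the open-loop system driven by `u`. Beforehand, `ẏ_d` and `w` are extended continuously to all
times by clamping to `[0, T]`.
-/

open MeasureTheory Set NormedSpace Matrix

theorem HasDerivAt.const_mulVec {𝕜 m n : Type*} [NontriviallyNormedField 𝕜] [CompleteSpace 𝕜]
    [Fintype m] [Fintype n] (M : Matrix m n 𝕜) {f : 𝕜 → n → 𝕜} {f' : n → 𝕜} {t : 𝕜}
    (hf : HasDerivAt f f' t) :
    HasDerivAt (fun s => M *ᵥ f s) (M *ᵥ f') t :=
  (LinearMap.toContinuousLinearMap M.mulVecLin).hasFDerivAt.comp_hasDerivAt t hf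

namespace Matrix

theorem mulVec_intervalIntegral {𝕜 m n : Type*} [RCLike 𝕜] [Fintype m] [Fintype n]
    (M : Matrix m n 𝕜) {f : ℝ → n → 𝕜} {a b : ℝ} {μ : Measure ℝ}
    (hf : IntervalIntegrable f μ a b) :
    M *ᵥ ∫ τ in a..b, f τ ∂μ = ∫ τ in a..b, M *ᵥ f τ ∂μ :=
  ((LinearMap.toContinuousLinearMap M.mulVecLin).intervalIntegral_comp_comm hf).symm

variable {ι : Type*} [Fintype ι] [DecidableEq ι] (A : Matrix ι ι ℝ)

theorem exp_add_smul (s t : ℝ) : exp ((s + t) • A) = exp (s • A) * exp (t • A) := by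
  rw [add_smul]
  exact exp_add_of_commute _ _ (((Commute.refl A).smul_left s).smul_right t)

theorem exp_smul_mulVec_exp_neg_smul_mulVec (t : ℝ) (v : ι → ℝ) :
    exp (t • A) *ᵥ (exp (-t • A) *ᵥ v) = v := by
  rw [mulVec_mulVec, ← exp_add_smul, add_neg_cancel, zero_smul, exp_zero, one_mulVec]

section Calculus

attribute [local instance] Matrix.linftyOpNormedAddCommGroup Matrix.linftyOpNormedRing
  Matrix.linftyOpNormedAlgebra

theorem continuous_exp_smul : Continuous fun t : ℝ => exp (t • A) :=
  exp_continuous.comp (continuous_id.smul continuous_const : Continuous fun t : ℝ => t • A)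

theorem continuous_exp_smul_mulVec {f : ℝ → ℝ} {g : ℝ → ι → ℝ} (hf : Continuous f)
    (hg : Continuous g) : Continuous fun τ => exp (f τ • A) *ᵥ g τ :=
  ((continuous_exp_smul A).comp hf).matrix_mulVec hg

theorem hasDerivAt_exp_smul_mulVec {x : ℝ → ι → ℝ} {x' : ι → ℝ} {t : ℝ}
    (hx : HasDerivAt x x' t) :
    HasDerivAt (fun s => exp (s • A) *ᵥ x s)
      (A *ᵥ (exp (t • A) *ᵥ x t) + exp (t • A) *ᵥ x') t := by
  let L : Matrix ι ι ℝ →L[ℝ] (ι → ℝ) →L[ℝ] ι → ℝ :=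
    LinearMap.toContinuousLinearMap
      (LinearMap.toContinuousLinearMap.toLinearMap ∘ₗ mulVecBilin ℝ ℝ)
  have hexp : HasDerivAt (fun s => L (exp (s • A))) (L (A * exp (t • A))) t :=
    L.hasFDerivAt.comp_hasDerivAt t (hasDerivAt_exp_smul_const' A t)
  simpa [L, mulVec_mulVec] using hexp.clm_apply hx

end Calculus

theorem exists_hasDerivAt_mulVec_add (x₀ : ι → ℝ) {g : ℝ → ι → ℝ} (hg : Continuous g) :
    ∃ x : ℝ → ι → ℝ, x 0 = x₀ ∧ ∀ t, HasDerivAt x (A *ᵥ x t + g t) t := by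
  have hint : Continuous fun s => exp (-s • A) *ᵥ g s :=
    continuous_exp_smul_mulVec A continuous_neg hg
  refine ⟨fun t => exp (t • A) *ᵥ (x₀ + ∫ s in 0..t, exp (-s • A) *ᵥ g s), by simp, fun t => ?_⟩
  have hG := (hint.integral_hasStrictDerivAt 0 t).hasDerivAt.const_add x₀
  simpa only [exp_smul_mulVec_exp_neg_smul_mulVec] using hasDerivAt_exp_smul_mulVec A hG

theorem eq_exp_smul_mulVec_add_integral {x g : ℝ → ι → ℝ}
    (hx : ∀ t, HasDerivAt x (A *ᵥ x t + g t) t) (hg : Continuous g) (t : ℝ) :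
    x t = exp (t • A) *ᵥ x 0 + ∫ τ in 0..t, exp ((t - τ) • A) *ᵥ g τ := by
  have hint : IntervalIntegrable (fun s => exp (-s • A) *ᵥ g s) volume 0 t :=
    (continuous_exp_smul_mulVec A continuous_neg hg).intervalIntegrable 0 t
  have hderiv : ∀ τ, HasDerivAt (fun s => exp (-s • A) *ᵥ x s) (exp (-τ • A) *ᵥ g τ) τ := by
    intro τ
    have h := hasDerivAt_exp_smul_mulVec (-A) (hx τ)
    simp only [smul_neg, ← neg_smul] at h
    convert h using 1
    rw [mulVec_add, mulVec_mulVec, mulVec_mulVec, neg_mul, neg_mulVec,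
      ((Commute.refl A).smul_right (-τ)).exp_right.eq]
    abel
  have hFTC := intervalIntegral.integral_eq_sub_of_hasDerivAt (fun τ _ => hderiv τ) hint
  calc x t = exp (t • A) *ᵥ (exp (-t • A) *ᵥ x t) :=
        (exp_smul_mulVec_exp_neg_smul_mulVec A t _).symm
    _ = exp (t • A) *ᵥ (x 0 + ∫ τ in 0..t, exp (-τ • A) *ᵥ g τ) := by
      rw [hFTC, neg_zero, zero_smul, exp_zero, one_mulVec, add_sub_cancel]
    _ = exp (t • A) *ᵥ x 0 + ∫ τ in 0..t, exp ((t - τ) • A) *ᵥ g τ := by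
      rw [mulVec_add, mulVec_intervalIntegral _ hint]
      congr 1
      refine intervalIntegral.integral_congr fun τ _ => ?_
      simp only [mulVec_mulVec, sub_eq_add_neg, exp_add_smul]

end Matrix

theorem exists_input_hasDerivAt_output {ι κ ρ : Type*} [Fintype ι] [DecidableEq ι] [Fintype κ]
    [Fintype ρ] [DecidableEq ρ] (A : Matrix ι ι ℝ) {B : Matrix ι κ ℝ} {C : Matrix ρ ι ℝ}
    (hCB : Function.Surjective (C * B).mulVec) (x₀ : ι → ℝ) {v : ℝ → ρ → ℝ} {w : ℝ → ι → ℝ}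
    (hv : Continuous v) (hw : Continuous w) :
    ∃ u : ℝ → κ → ℝ, ∃ x : ℝ → ι → ℝ, Continuous u ∧ x 0 = x₀ ∧
      (∀ t, HasDerivAt x (A *ᵥ x t + (B *ᵥ u t + w t)) t) ∧
      ∀ t, HasDerivAt (fun s => C *ᵥ x s) (v t) t := by
  obtain ⟨K, hK⟩ := mulVec_surjective_iff_exists_right_inverse.1 hCB
  obtain ⟨x, hx0, hx⟩ := (A - B * K * (C * A)).exists_hasDerivAt_mulVec_add x₀
    (g := fun t => B *ᵥ (K *ᵥ (v t - C *ᵥ w t)) + w t) (by fun_prop)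
  set u : ℝ → κ → ℝ := fun t => K *ᵥ (v t - C *ᵥ w t - C *ᵥ (A *ᵥ x t))
  have hclosed : ∀ t, A *ᵥ x t + (B *ᵥ u t + w t) =
      (A - B * K * (C * A)) *ᵥ x t + (B *ᵥ (K *ᵥ (v t - C *ᵥ w t)) + w t) := by
    intro t
    simp only [u, sub_mulVec, mulVec_sub, ← mulVec_mulVec, Matrix.mul_assoc]
    abel
  have htrack : ∀ t, C *ᵥ (A *ᵥ x t + (B *ᵥ u t + w t)) = v t := by
    intro t
    simp only [u, mulVec_add, mulVec_mulVec, ← Matrix.mul_assoc, hK, one_mulVec]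
    abel
  have hxc : Continuous x := continuous_iff_continuousAt.2 fun t => (hx t).continuousAt
  have hx' : ∀ t, HasDerivAt x (A *ᵥ x t + (B *ᵥ u t + w t)) t := fun t => hclosed t ▸ hx t
  exact ⟨u, x, by fun_prop, hx0, hx', fun t => htrack t ▸ (hx' t).const_mulVec C⟩

/-- **trackability for full row rank `C·B`.** If `C·B` has full row rank and
`y_d` is continuously differentiable on `[0,T]` with `y_d(0) = C·x₀`, then `y_d` is
trackable: some continuous input `u` on `[0,T]` produces the output `y_d`. -/
theorem trackable_of_full_row_rank
    (T : ℝ) (hT : 0 < T) (n p q : ℕ)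
    (A : Matrix (Fin n) (Fin n) ℝ) (B : Matrix (Fin n) (Fin p) ℝ)
    (C : Matrix (Fin q) (Fin n) ℝ) (x₀ : Fin n → ℝ)
    (w : ℝ → Fin n → ℝ) (hw : ContinuousOn w (Icc 0 T))
    (hCB : Function.Surjective fun x : Fin p → ℝ => (C * B).mulVec x)
    (yd : ℝ → Fin q → ℝ) (hyd : ContDiffOn ℝ 1 yd (Icc 0 T))
    (hyd0 : yd 0 = C.mulVec x₀) :
    ∃ u : ℝ → Fin p → ℝ, ContinuousOn u (Icc 0 T) ∧
      ∀ t ∈ Icc (0:ℝ) T,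
        C.mulVec ((NormedSpace.exp (t • A)).mulVec x₀) +
          (∫ τ in (0:ℝ)..t,
            C.mulVec ((NormedSpace.exp ((t - τ) • A)).mulVec (B.mulVec (u τ) + w τ))) = yd t := by
  set v := IccExtend hT.le ((Icc 0 T).domRestrict (derivWithin yd (Icc 0 T)))
  set W := IccExtend hT.le ((Icc 0 T).domRestrict w)
  have hv : Continuous v := continuous_IccExtend_iff.2
    (hyd.continuousOn_derivWithin (uniqueDiffOn_Icc hT) le_rfl).domRestrict
  have hW : Continuous W := continuous_IccExtend_iff.2 hw.domRestrict
  obtain ⟨u, x, hu, hx0, hx, hCx⟩ := exists_input_hasDerivAt_output A hCB x₀ hv hW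
  have hyd' : ∀ t ∈ Ico 0 T, HasDerivWithinAt yd (v t) (Ici t) t := fun t ht => by
    rw [show v t = _ from IccExtend_of_mem hT.le _ (Ico_subset_Icc_self ht)]
    exact (hyd.differentiableOn one_ne_zero t (Ico_subset_Icc_self ht)).hasDerivWithinAt
      |>.mono_of_mem_nhdsWithin (Icc_mem_nhdsGE_of_mem ht)
  have htrack : ∀ t ∈ Icc 0 T, C *ᵥ x t = yd t :=
    eq_of_has_deriv_right_eq (fun t _ => (hCx t).hasDerivWithinAt) hyd'
      (fun t _ => (hCx t).continuousAt.continuousWithinAt) hyd.continuousOn (by rw [hx0, hyd0])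
  refine ⟨u, hu.continuousOn, fun t ht => ?_⟩
  have hWw : EqOn W w (uIcc 0 t) := fun τ hτ =>
    IccExtend_of_mem hT.le _ (uIcc_subset_Icc ⟨le_rfl, hT.le⟩ ht hτ)
  rw [← htrack t ht, eq_exp_smul_mulVec_add_integral A hx (by fun_prop) t, hx0, mulVec_add,
    mulVec_intervalIntegral]
  · exact congrArg _ (intervalIntegral.integral_congr fun τ hτ => by simp only [hWw hτ])
  · exact (continuous_exp_smul_mulVec A (by fun_prop) (by fun_prop)).intervalIntegrable 0 t
end

section
/- Let p = q + r with r ≥ 0, write B = [B₁ B₂] where B₁ ∈ ℝ^{n×q} consists of the first q columns of B and B₂ ∈ ℝ^{n×r} of the last r columns, and assume the q×q matrix C·B₁ is invertible. Let y_d : [0,T] → ℝ^q be continuously differentiable with y_d(0) = C·x₀. Then for every continuous f : [0,T] → ℝ^r there exists a unique continuous g : [0,T] → ℝ^q such that the input u(t) = (g(t), f(t)) (whose first q components are g(t) and last r components are f(t)) satisfies y(u)(t) = y_d(t) for all t ∈ [0,T]. -/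
/-!
Since `y = C x` starts at `C x₀ = y_d 0`, the output follows `y_d` exactly when its derivative
does, i.e. when `C A x + C B₁ g + C B₂ f + C w = y_d'`. As `C B₁` is invertible, this is the
feedback law `g = (C B₁)⁻¹ (y_d' - C B₂ f - C w - C A x)`. Substituting it into `x' = A x + B u + w`
gives a linear ODE for `x` alone; the input read off from its unique solution tracks `y_d`, and
every tracking input is this one.
-/

open MeasureTheory Set NormedSpace Matrix

section MatrixCalculus

variable {m n : Type*} [Fintype n] {s : Set ℝ} {t : ℝ}

theorem ContinuousOn.matrix_mulVec {M : ℝ → Matrix m n ℝ} {v : ℝ → n → ℝ}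
    (hM : ContinuousOn M s) (hv : ContinuousOn v s) : ContinuousOn (fun u => M u *ᵥ v u) s :=
  (continuous_fst.matrix_mulVec continuous_snd).comp_continuousOn (hM.prodMk hv)

theorem HasDerivWithinAt.const_mulVec [Fintype m] (C : Matrix m n ℝ) {v : ℝ → n → ℝ}
    {v' : n → ℝ} (hv : HasDerivWithinAt v v' s t) :
    HasDerivWithinAt (fun u => C *ᵥ v u) (C *ᵥ v') s t :=
  (mulVecLin C).toContinuousLinearMap.hasFDerivAt.comp_hasDerivWithinAt t hv

theorem Matrix.mulVec_intervalIntegral_s11 [Fintype m] (C : Matrix m n ℝ) {v : ℝ → n → ℝ}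
    {a b : ℝ} (hv : IntervalIntegrable v volume a b) :
    C *ᵥ ∫ τ in a..b, v τ = ∫ τ in a..b, C *ᵥ v τ :=
  ((mulVecLin C).toContinuousLinearMap.intervalIntegral_comp_comm hv).symm

section LinftyOp

-- Any norm inducing the product topology would do: the statements only see that topology.
attribute [local instance] Matrix.linftyOpNormedAddCommGroup Matrix.linftyOpNormedSpace

theorem HasDerivWithinAt.matrix_mulVec [Fintype m] {M : ℝ → Matrix m n ℝ} {M' : Matrix m n ℝ}
    {v : ℝ → n → ℝ} {v' : n → ℝ}
    (hM : HasDerivWithinAt M M' s t) (hv : HasDerivWithinAt v v' s t) :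
    HasDerivWithinAt (fun u => M u *ᵥ v u) (M' *ᵥ v t + M t *ᵥ v') s t := by
  simpa [add_comm] using
    (mulVecBilin ℝ ℝ).toContinuousBilinearMap.hasDerivWithinAt_of_bilinear hM hv

end LinftyOp

end MatrixCalculus

section MatrixExp

variable {n : Type*} [Fintype n] [DecidableEq n] (A : Matrix n n ℝ)

theorem Matrix.exp_add_smul_s11 (s t : ℝ) : exp ((s + t) • A) = exp (s • A) * exp (t • A) := by
  rw [add_smul]
  exact exp_add_of_commute _ _ (((Commute.refl A).smul_left s).smul_right t)

attribute [local instance] Matrix.linftyOpNormedRing Matrix.linftyOpNormedAlgebra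

theorem Matrix.continuous_exp_smul_s11 : Continuous fun t : ℝ => exp (t • A) := by
  fun_prop

theorem HasDerivWithinAt.exp_smul_mulVec {v : ℝ → n → ℝ} {v' : n → ℝ} {s : Set ℝ} {t : ℝ}
    (hv : HasDerivWithinAt v v' s t) :
    HasDerivWithinAt (fun u => NormedSpace.exp (u • A) *ᵥ v u)
      (A *ᵥ (NormedSpace.exp (t • A) *ᵥ v t) + NormedSpace.exp (t • A) *ᵥ v') s t := by
  convert (hasDerivAt_exp_smul_const' A t).hasDerivWithinAt.matrix_mulVec hv using 2 <;>
    first | rfl | exact mulVec_mulVec (v t) A (NormedSpace.exp (t • A))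

end MatrixExp

theorem eqOn_Icc_iff_of_hasDerivWithinAt {E : Type*} [NormedAddCommGroup E] [NormedSpace ℝ E]
    {f g f' g' : ℝ → E} {a b : ℝ} (hab : a < b)
    (hf : ∀ t ∈ Icc a b, HasDerivWithinAt f (f' t) (Icc a b) t)
    (hg : ∀ t ∈ Icc a b, HasDerivWithinAt g (g' t) (Icc a b) t) (ha : f a = g a) :
    EqOn f g (Icc a b) ↔ EqOn f' g' (Icc a b) := by
  refine ⟨fun hfg t ht => ?_, fun hfg => ?_⟩
  · exact (uniqueDiffOn_Icc hab t ht).eq_deriv _ (hf t ht) ((hg t ht).congr_of_mem hfg ht)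
  · refine eq_of_has_deriv_right_eq (f' := f') (fun t ht => ?_) (fun t ht => ?_)
      (fun t ht => (hf t ht).continuousWithinAt) (fun t ht => (hg t ht).continuousWithinAt) ha
    · exact (hf t (Ico_subset_Icc_self ht)).mono_of_mem_nhdsWithin (Icc_mem_nhdsGE_of_mem ht)
    · rw [hfg (Ico_subset_Icc_self ht)]
      exact (hg t (Ico_subset_Icc_self ht)).mono_of_mem_nhdsWithin (Icc_mem_nhdsGE_of_mem ht)

section Duhamel

variable {n : Type*} [Fintype n] [DecidableEq n] (A : Matrix n n ℝ) (x₀ : n → ℝ)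

/-- Duhamel's formula for the solution of `x' = A x + v`, `x 0 = x₀`. -/
noncomputable def duhamel (v : ℝ → n → ℝ) (t : ℝ) : n → ℝ :=
  exp (t • A) *ᵥ x₀ + ∫ τ in (0 : ℝ)..t, exp ((t - τ) • A) *ᵥ v τ

variable {v : ℝ → n → ℝ} {T : ℝ}

@[simp]
theorem duhamel_zero : duhamel A x₀ v 0 = x₀ := by
  simp [duhamel]

theorem duhamel_eq_exp_smul_mulVec (hv : ContinuousOn v (Icc 0 T)) {t : ℝ} (ht : t ∈ Icc 0 T) :
    duhamel A x₀ v t = exp (t • A) *ᵥ (x₀ + ∫ τ in (0 : ℝ)..t, exp ((-τ) • A) *ᵥ v τ) := by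
  have hint : IntervalIntegrable (fun τ => exp ((-τ) • A) *ᵥ v τ) volume 0 t :=
    (((continuous_exp_smul_s11 A).comp continuous_neg).continuousOn.matrix_mulVec
      (hv.mono (Icc_subset_Icc_right ht.2))).intervalIntegrable_of_Icc ht.1
  rw [duhamel, mulVec_add, mulVec_intervalIntegral_s11 _ hint]
  congr 1
  refine intervalIntegral.integral_congr fun τ _ => ?_
  simp only [mulVec_mulVec, ← exp_add_smul_s11, sub_eq_add_neg]

theorem hasDerivWithinAt_duhamel (hv : ContinuousOn v (Icc 0 T)) {t : ℝ} (ht : t ∈ Icc 0 T) :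
    HasDerivWithinAt (duhamel A x₀ v) (A *ᵥ duhamel A x₀ v t + v t) (Icc 0 T) t := by
  have hG : ContinuousOn (fun τ => exp ((-τ) • A) *ᵥ v τ) (Icc 0 T) :=
    ((continuous_exp_smul_s11 A).comp continuous_neg).continuousOn.matrix_mulVec hv
  have : Fact (t ∈ Icc 0 T) := ⟨ht⟩
  have hFTC := intervalIntegral.integral_hasDerivWithinAt_right (s := Icc 0 T)
    ((hG.mono (Icc_subset_Icc_right ht.2)).intervalIntegrable_of_Icc ht.1)
    (hG.stronglyMeasurableAtFilter_nhdsWithin measurableSet_Icc t) (hG t ht)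
  have hexp := (hFTC.const_add x₀).exp_smul_mulVec A
  have hcancel : exp (t • A) *ᵥ (exp ((-t) • A) *ᵥ v t) = v t := by
    rw [mulVec_mulVec, ← exp_add_smul_s11, add_neg_cancel, zero_smul, exp_zero, one_mulVec]
  rw [hcancel, ← duhamel_eq_exp_smul_mulVec A x₀ hv ht] at hexp
  exact hexp.congr_of_mem (fun u hu => duhamel_eq_exp_smul_mulVec A x₀ hv hu) ht

theorem continuousOn_duhamel (hv : ContinuousOn v (Icc 0 T)) :
    ContinuousOn (duhamel A x₀ v) (Icc 0 T) :=
  fun _ ht => (hasDerivWithinAt_duhamel A x₀ hv ht).continuousWithinAt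

theorem eqOn_duhamel_of_hasDerivWithinAt (hv : ContinuousOn v (Icc 0 T)) {x : ℝ → n → ℝ}
    (hx : ∀ t ∈ Icc 0 T, HasDerivWithinAt x (A *ᵥ x t + v t) (Icc 0 T) t) (h0 : x 0 = x₀) :
    EqOn x (duhamel A x₀ v) (Icc 0 T) := by
  set L := (mulVecLin A).toContinuousLinearMap
  have hlip : ∀ t, LipschitzWith ‖L‖₊ fun z => A *ᵥ z + v t := fun t =>
    (L.lipschitz.add (LipschitzWith.const (v t))).weaken (add_zero _).le
  have hright : ∀ {y : ℝ → n → ℝ},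
      (∀ t ∈ Icc 0 T, HasDerivWithinAt y (A *ᵥ y t + v t) (Icc 0 T) t) →
      ∀ t ∈ Ico 0 T, HasDerivWithinAt y (A *ᵥ y t + v t) (Ici t) t := fun hy t ht =>
    (hy t (Ico_subset_Icc_self ht)).mono_of_mem_nhdsWithin (Icc_mem_nhdsGE_of_mem ht)
  exact ODE_solution_unique hlip (fun t ht => (hx t ht).continuousWithinAt) (hright hx)
    (continuousOn_duhamel A x₀ hv) (hright fun t ht => hasDerivWithinAt_duhamel A x₀ hv ht)
    (by rw [h0, duhamel_zero])

theorem mulVec_duhamel {m : Type*} [Fintype m] (C : Matrix m n ℝ)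
    (hv : ContinuousOn v (Icc 0 T)) {t : ℝ} (ht : t ∈ Icc 0 T) :
    C *ᵥ duhamel A x₀ v t =
      C *ᵥ (exp (t • A) *ᵥ x₀) + ∫ τ in (0 : ℝ)..t, C *ᵥ (exp ((t - τ) • A) *ᵥ v τ) := by
  have hint : IntervalIntegrable (fun τ => exp ((t - τ) • A) *ᵥ v τ) volume 0 t :=
    (((continuous_exp_smul_s11 A).comp (continuous_sub_left t)).continuousOn.matrix_mulVec
      (hv.mono (Icc_subset_Icc_right ht.2))).intervalIntegrable_of_Icc ht.1
  rw [duhamel, mulVec_add, mulVec_intervalIntegral_s11 _ hint]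

end Duhamel

theorem Matrix.mulVec_finAppend {n α : Type*} [NonUnitalNonAssocSemiring α] {q r : ℕ}
    (B : Matrix n (Fin (q + r)) α) (a : Fin q → α) (b : Fin r → α) :
    B *ᵥ Fin.append a b =
      B.submatrix id (Fin.castAdd r) *ᵥ a + B.submatrix id (Fin.natAdd q) *ᵥ b := by
  ext i
  simp [mulVec, dotProduct, Fin.sum_univ_add]

section OutputTracking

variable {n m : Type*} [Fintype n] [Fintype m]
  (A : Matrix n n ℝ) (B : Matrix n m ℝ) (C : Matrix m n ℝ) (x₀ : n → ℝ) {T : ℝ}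

theorem mulVec_duhamel_eqOn_iff [DecidableEq n] (hT : 0 < T) {u : ℝ → n → ℝ}
    (hu : ContinuousOn u (Icc 0 T))
    {yd yd' : ℝ → m → ℝ} (hyd : ∀ t ∈ Icc 0 T, HasDerivWithinAt yd (yd' t) (Icc 0 T) t)
    (hyd0 : yd 0 = C *ᵥ x₀) :
    EqOn (fun t => C *ᵥ duhamel A x₀ u t) yd (Icc 0 T) ↔
      ∀ t ∈ Icc 0 T, C *ᵥ (A *ᵥ duhamel A x₀ u t + u t) = yd' t :=
  eqOn_Icc_iff_of_hasDerivWithinAt hT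
    (fun _ ht => (hasDerivWithinAt_duhamel A x₀ hu ht).const_mulVec C) hyd
    (by rw [duhamel_zero, hyd0])

theorem mulVec_add_mulVec_eq_iff [DecidableEq m] (hCB : IsUnit (C * B).det)
    (X : n → ℝ) (γ : m → ℝ) (e : n → ℝ) (z : m → ℝ) :
    C *ᵥ (A *ᵥ X + (B *ᵥ γ + e)) = z ↔
      γ = -((C * B)⁻¹ * (C * A)) *ᵥ X + (C * B)⁻¹ *ᵥ (z - C *ᵥ e) := by
  have hsolve : ∀ y, (C * B) *ᵥ γ = y ↔ γ = (C * B)⁻¹ *ᵥ y := fun y => by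
    constructor
    · rintro rfl
      rw [mulVec_mulVec, nonsing_inv_mul _ hCB, one_mulVec]
    · rintro rfl
      rw [mulVec_mulVec, mul_nonsing_inv _ hCB, one_mulVec]
  rw [neg_mulVec, ← mulVec_mulVec, neg_add_eq_sub, ← mulVec_sub, ← hsolve]
  simp only [mulVec_add, mulVec_mulVec]
  constructor
  · rintro rfl
    abel
  · intro h
    rw [h]
    abel

theorem existsUnique_tracking_input [DecidableEq n] [DecidableEq m] (hT : 0 < T)
    (hCB : IsUnit (C * B)) {e : ℝ → n → ℝ} (he : ContinuousOn e (Icc 0 T))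
    {yd yd' : ℝ → m → ℝ} (hyd' : ContinuousOn yd' (Icc 0 T))
    (hyd : ∀ t ∈ Icc 0 T, HasDerivWithinAt yd (yd' t) (Icc 0 T) t) (hyd0 : yd 0 = C *ᵥ x₀) :
    ∃ g : ℝ → m → ℝ, (ContinuousOn g (Icc 0 T) ∧
        EqOn (fun t => C *ᵥ duhamel A x₀ (fun τ => B *ᵥ g τ + e τ) t) yd (Icc 0 T)) ∧
      ∀ g' : ℝ → m → ℝ, ContinuousOn g' (Icc 0 T) →
        EqOn (fun t => C *ᵥ duhamel A x₀ (fun τ => B *ᵥ g' τ + e τ) t) yd (Icc 0 T) →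
        EqOn g' g (Icc 0 T) := by
  have hdet : IsUnit (C * B).det := (isUnit_iff_isUnit_det _).1 hCB
  -- `g = K x + k` is the feedback law forced by `C x' = yd'`; `x` is the closed-loop state.
  set K := -((C * B)⁻¹ * (C * A))
  set k := fun t => (C * B)⁻¹ *ᵥ (yd' t - C *ᵥ e t)
  have hk : ContinuousOn k (Icc 0 T) :=
    continuousOn_const.matrix_mulVec (hyd'.sub (continuousOn_const.matrix_mulVec he))
  have hforcing : ∀ {γ : ℝ → m → ℝ}, ContinuousOn γ (Icc 0 T) →
      ContinuousOn (fun t => B *ᵥ γ t + e t) (Icc 0 T) :=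
    fun hγ => (continuousOn_const.matrix_mulVec hγ).add he
  have hclosed : ∀ (X : n → ℝ) (t : ℝ),
      A *ᵥ X + (B *ᵥ (K *ᵥ X + k t) + e t) = (A + B * K) *ᵥ X + (B *ᵥ k t + e t) := by
    intro X t
    simp only [add_mulVec, mulVec_add, mulVec_mulVec]
    abel
  set x := duhamel (A + B * K) x₀ (fun t => B *ᵥ k t + e t)
  have hx : ContinuousOn x (Icc 0 T) := continuousOn_duhamel _ x₀ (hforcing hk)
  set g := fun t => K *ᵥ x t + k t
  have hg : ContinuousOn g (Icc 0 T) := (continuousOn_const.matrix_mulVec hx).add hk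
  have hxg : EqOn x (duhamel A x₀ (fun τ => B *ᵥ g τ + e τ)) (Icc 0 T) :=
    eqOn_duhamel_of_hasDerivWithinAt A x₀ (hforcing hg)
      (fun t ht => by rw [hclosed]; exact hasDerivWithinAt_duhamel _ x₀ (hforcing hk) ht)
      (duhamel_zero _ _)
  refine ⟨g, ⟨hg, (mulVec_duhamel_eqOn_iff A C x₀ hT (hforcing hg) hyd hyd0).2 fun t ht => ?_⟩,
    fun g' hg' hg'y => ?_⟩
  · rw [mulVec_add_mulVec_eq_iff A B C hdet, ← hxg ht]
  · set x' := duhamel A x₀ (fun τ => B *ᵥ g' τ + e τ)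
    have hlaw : ∀ t ∈ Icc 0 T, g' t = K *ᵥ x' t + k t := fun t ht =>
      (mulVec_add_mulVec_eq_iff A B C hdet _ _ _ _).1
        ((mulVec_duhamel_eqOn_iff A C x₀ hT (hforcing hg') hyd hyd0).1 hg'y t ht)
    have hx'x : EqOn x' x (Icc 0 T) :=
      eqOn_duhamel_of_hasDerivWithinAt _ x₀ (hforcing hk)
        (fun t ht => by
          rw [← hclosed, ← hlaw t ht]; exact hasDerivWithinAt_duhamel A x₀ (hforcing hg') ht)
        (duhamel_zero _ _)
    intro t ht
    rw [hlaw t ht, hx'x ht]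

end OutputTracking

/-- **over-actuated case: free input components.** Write `p = q + r` and
`B = [B₁ B₂]` with `C·B₁` invertible. For a `C¹` trajectory `y_d` with `y_d(0) = C·x₀`
and any continuous free part `f : [0,T] → ℝʳ`, there is a unique continuous `g` such that
the input `u(t) = (g(t), f(t))` generates the output `y_d`. -/
theorem unique_essential_input_of_over_actuated
    (T : ℝ) (hT : 0 < T) (n q r : ℕ)
    (A : Matrix (Fin n) (Fin n) ℝ) (B : Matrix (Fin n) (Fin (q + r)) ℝ)
    (C : Matrix (Fin q) (Fin n) ℝ) (x₀ : Fin n → ℝ)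
    (w : ℝ → Fin n → ℝ) (hw : ContinuousOn w (Icc 0 T))
    (hCB₁ : IsUnit (C * Matrix.of fun i (j : Fin q) => B i (Fin.castAdd r j)))
    (yd : ℝ → Fin q → ℝ) (hyd : ContDiffOn ℝ 1 yd (Icc 0 T))
    (hyd0 : yd 0 = C.mulVec x₀)
    (f : ℝ → Fin r → ℝ) (hf : ContinuousOn f (Icc 0 T)) :
    ∃ g : ℝ → Fin q → ℝ,
      (ContinuousOn g (Icc 0 T) ∧
        ∀ t ∈ Icc (0:ℝ) T,
          C.mulVec ((NormedSpace.exp (t • A)).mulVec x₀) +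
            (∫ τ in (0:ℝ)..t,
              C.mulVec ((NormedSpace.exp ((t - τ) • A)).mulVec
                (B.mulVec (Fin.append (g τ) (f τ)) + w τ))) = yd t) ∧
      ∀ g' : ℝ → Fin q → ℝ,
        (ContinuousOn g' (Icc 0 T) ∧
          ∀ t ∈ Icc (0:ℝ) T,
            C.mulVec ((NormedSpace.exp (t • A)).mulVec x₀) +
              (∫ τ in (0:ℝ)..t,
                C.mulVec ((NormedSpace.exp ((t - τ) • A)).mulVec
                  (B.mulVec (Fin.append (g' τ) (f τ)) + w τ))) = yd t) →
        ∀ t ∈ Icc (0:ℝ) T, g' t = g t := by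
  set B₁ := B.submatrix id (Fin.castAdd r)
  set e := fun τ => B.submatrix id (Fin.natAdd q) *ᵥ f τ + w τ
  have he : ContinuousOn e (Icc 0 T) := (continuousOn_const.matrix_mulVec hf).add hw
  have hinput : ∀ (g : ℝ → Fin q → ℝ) (τ : ℝ),
      B *ᵥ Fin.append (g τ) (f τ) + w τ = B₁ *ᵥ g τ + e τ :=
    fun g τ => by rw [mulVec_finAppend, add_assoc]
  have houtput : ∀ g : ℝ → Fin q → ℝ, ContinuousOn g (Icc 0 T) → ∀ t ∈ Icc 0 T,
      C *ᵥ (exp (t • A) *ᵥ x₀) +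
          ∫ τ in (0 : ℝ)..t, C *ᵥ (exp ((t - τ) • A) *ᵥ (B *ᵥ Fin.append (g τ) (f τ) + w τ)) =
        C *ᵥ duhamel A x₀ (fun τ => B₁ *ᵥ g τ + e τ) t := fun g hg t ht => by
    have hu : ContinuousOn (fun τ => B₁ *ᵥ g τ + e τ) (Icc 0 T) :=
      (continuousOn_const.matrix_mulVec hg).add he
    simp only [mulVec_duhamel A x₀ C hu ht, hinput]
  obtain ⟨g, ⟨hg, hgy⟩, huniq⟩ := existsUnique_tracking_input A B₁ C x₀ hT hCB₁ he
    (hyd.continuousOn_derivWithin (uniqueDiffOn_Icc hT) le_rfl)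
    (fun t ht => (hyd.differentiableOn one_ne_zero t ht).hasDerivWithinAt) hyd0
  exact ⟨g, ⟨hg, fun t ht => (houtput g hg t ht).trans (hgy ht)⟩, fun g' ⟨hg', hg'y⟩ =>
    huniq g' hg' fun t ht => (houtput g' hg' t ht).symm.trans (hg'y t ht)⟩
end

section
/- Let q < p, assume the linear map x ↦ (C·B)·x from ℝ^p to ℝ^q is surjective, and let y_d : [0,T] → ℝ^q be continuously differentiable with y_d(0) = C·x₀. Then y_d is trackable but not realizable: there exist continuous inputs u₁, u₂ : [0,T] → ℝ^p with u₁(t) ≠ u₂(t) for some t ∈ [0,T] such that y(u₁)(t) = y_d(t) and y(u₂)(t) = y_d(t) for all t ∈ [0,T]. -/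
open MeasureTheory Set NormedSpace

namespace TrackAux

variable {n m k : ℕ}

/-- `mulVec` by a constant matrix, as a continuous linear map. -/
noncomputable def mulVecL (M : Matrix (Fin m) (Fin k) ℝ) : (Fin k → ℝ) →L[ℝ] (Fin m → ℝ) :=
  LinearMap.toContinuousLinearMap M.mulVecLin

@[simp] lemma mulVecL_apply (M : Matrix (Fin m) (Fin k) ℝ) (v : Fin k → ℝ) :
    mulVecL M v = M.mulVec v := rfl

lemma cont_mulVec (M : Matrix (Fin m) (Fin k) ℝ) {g : ℝ → Fin k → ℝ} (hg : Continuous g) :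
    Continuous fun t => M.mulVec (g t) := by
  exact (mulVecL M).continuous.comp hg

lemma hasDerivAt_mulVec (M : Matrix (Fin m) (Fin k) ℝ) {g : ℝ → Fin k → ℝ} {g' : Fin k → ℝ}
    {t : ℝ} (hg : HasDerivAt g g' t) :
    HasDerivAt (fun s => M.mulVec (g s)) (M.mulVec g') t := by
  have := (mulVecL M).hasFDerivAt.comp_hasDerivAt (f := g) (x := t) hg
  exact this

lemma exp_mul_exp_neg (A : Matrix (Fin n) (Fin n) ℝ) (t : ℝ) :
    exp (t • A) * exp (t • (-A)) = 1 := by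
  have hc : Commute (t • A) (t • (-A)) :=
    (((Commute.refl A).neg_right).smul_right t).smul_left t
  rw [← Matrix.exp_add_of_commute _ _ hc]
  rw [← smul_add, add_neg_cancel, smul_zero, exp_zero]

lemma hasDerivAt_exp_mulVec (A : Matrix (Fin n) (Fin n) ℝ) {P : ℝ → Fin n → ℝ}
    {P' : Fin n → ℝ} {t : ℝ} (hP : HasDerivAt P P' t) :
    HasDerivAt (fun s => (exp (s • A)).mulVec (P s))
      (A.mulVec ((exp (t • A)).mulVec (P t)) + (exp (t • A)).mulVec P') t := by
  letI : SeminormedRing (Matrix (Fin n) (Fin n) ℝ) := Matrix.linftyOpSemiNormedRing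
  letI : NormedRing (Matrix (Fin n) (Fin n) ℝ) := Matrix.linftyOpNormedRing
  letI : NormedAlgebra ℝ (Matrix (Fin n) (Fin n) ℝ) := Matrix.linftyOpNormedAlgebra
  let β : Matrix (Fin n) (Fin n) ℝ →L[ℝ] (Fin n → ℝ) →L[ℝ] (Fin n → ℝ) :=
    LinearMap.toContinuousLinearMap
      { toFun := fun M => mulVecL M
        map_add' := fun M N => by ext v i; simp [mulVecL, Matrix.add_mulVec]
        map_smul' := fun a M => by ext v i; simp [mulVecL, Matrix.smul_mulVec] }
  have hβ : ∀ (M : Matrix (Fin n) (Fin n) ℝ) (v : Fin n → ℝ), β M v = M.mulVec v := by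
    intro M v
    simp [β, mulVecL]
  have hE : HasDerivAt (fun s : ℝ => exp (s • A)) (A * exp (t • A)) t :=
    hasDerivAt_exp_smul_const' A t
  have h1 : HasDerivAt (fun s : ℝ => β (exp (s • A))) (β (A * exp (t • A))) t :=
    β.hasFDerivAt.comp_hasDerivAt t hE
  have h2 := h1.clm_apply hP
  have h3 : HasDerivAt (fun s => (exp (s • A)).mulVec (P s))
      ((A * exp (t • A)).mulVec (P t) + (exp (t • A)).mulVec P') t := by
    simpa only [hβ] using h2
  rwa [← Matrix.mulVec_mulVec] at h3

lemma continuous_exp_mulVec (A : Matrix (Fin n) (Fin n) ℝ) {g : ℝ → Fin n → ℝ}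
    (hg : Continuous g) : Continuous fun t : ℝ => (exp (t • A)).mulVec (g t) := by
  letI : SeminormedRing (Matrix (Fin n) (Fin n) ℝ) := Matrix.linftyOpSemiNormedRing
  letI : NormedRing (Matrix (Fin n) (Fin n) ℝ) := Matrix.linftyOpNormedRing
  letI : NormedAlgebra ℝ (Matrix (Fin n) (Fin n) ℝ) := Matrix.linftyOpNormedAlgebra
  let β : Matrix (Fin n) (Fin n) ℝ →L[ℝ] (Fin n → ℝ) →L[ℝ] (Fin n → ℝ) :=
    LinearMap.toContinuousLinearMap
      { toFun := fun M => mulVecL M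
        map_add' := fun M N => by ext v i; simp [mulVecL, Matrix.add_mulVec]
        map_smul' := fun a M => by ext v i; simp [mulVecL, Matrix.smul_mulVec] }
  have hβ : ∀ (M : Matrix (Fin n) (Fin n) ℝ) (v : Fin n → ℝ), β M v = M.mulVec v := by
    intro M v
    simp [β, mulVecL]
  have hE : Continuous fun s : ℝ => exp (s • A) :=
    continuous_iff_continuousAt.2 fun s => (hasDerivAt_exp_smul_const' A s).continuousAt
  have := (β.continuous.comp hE).clm_apply hg
  simpa only [Function.comp_apply, hβ] using this

/-- Solve the linear ODE `F' = Aa F + b`, `F 0 = 0`, explicitly. -/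
lemma solveLin (Aa : Matrix (Fin n) (Fin n) ℝ) {b : ℝ → Fin n → ℝ} (hb : Continuous b) :
    ∃ F : ℝ → Fin n → ℝ, F 0 = 0 ∧ Continuous F ∧
      ∀ t, HasDerivAt F (Aa.mulVec (F t) + b t) t := by
  have hbint : Continuous fun τ : ℝ => (exp (τ • (-Aa))).mulVec (b τ) :=
    continuous_exp_mulVec _ hb
  refine ⟨fun t => (exp (t • Aa)).mulVec
      (∫ τ in (0:ℝ)..t, (exp (τ • (-Aa))).mulVec (b τ)), ?_, ?_, ?_⟩
  · simp
  · refine continuous_iff_continuousAt.2 fun t => ?_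
    have hP : HasDerivAt (fun s => ∫ τ in (0:ℝ)..s, (exp (τ • (-Aa))).mulVec (b τ))
        ((exp (t • (-Aa))).mulVec (b t)) t := (hbint.integral_hasStrictDerivAt 0 t).hasDerivAt
    exact (hasDerivAt_exp_mulVec Aa hP).continuousAt
  · intro t
    have hP : HasDerivAt (fun s => ∫ τ in (0:ℝ)..s, (exp (τ • (-Aa))).mulVec (b τ))
        ((exp (t • (-Aa))).mulVec (b t)) t := (hbint.integral_hasStrictDerivAt 0 t).hasDerivAt
    have h := hasDerivAt_exp_mulVec Aa hP
    have h2 : (exp (t • Aa)).mulVec ((exp (t • (-Aa))).mulVec (b t)) = b t := by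
      rw [Matrix.mulVec_mulVec, exp_mul_exp_neg, Matrix.one_mulVec]
    rwa [h2] at h

/-- Master computation: if `G` solves `G' = A G + B u + d`, `G 0 = x₀`, then the
variation-of-constants output formula gives `C G`. -/
lemma output_eq {nn pp qq : ℕ} (A : Matrix (Fin nn) (Fin nn) ℝ)
    (B : Matrix (Fin nn) (Fin pp) ℝ) (C : Matrix (Fin qq) (Fin nn) ℝ) (x₀ : Fin nn → ℝ)
    {d : ℝ → Fin nn → ℝ} {u : ℝ → Fin pp → ℝ}
    (hc : Continuous fun s => B.mulVec (u s) + d s)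
    {G : ℝ → Fin nn → ℝ} (hG0 : G 0 = x₀)
    (hG : ∀ t, HasDerivAt G (A.mulVec (G t) + (B.mulVec (u t) + d t)) t) (t : ℝ) :
    C.mulVec ((exp (t • A)).mulVec x₀) +
      (∫ τ in (0:ℝ)..t, C.mulVec ((exp ((t - τ) • A)).mulVec (B.mulVec (u τ) + d τ))) =
      C.mulVec (G t) := by
  set c : ℝ → Fin nn → ℝ := fun s => B.mulVec (u s) + d s with hcdef
  -- Q s = exp (s • (-A)) *ᵥ G s  has derivative exp (s • (-A)) *ᵥ c s
  set Q : ℝ → Fin nn → ℝ := fun s => (exp (s • (-A))).mulVec (G s) with hQdef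
  have hQ : ∀ s, HasDerivAt Q ((exp (s • (-A))).mulVec (c s)) s := by
    intro s
    have h := hasDerivAt_exp_mulVec (-A) (hG s)
    have h2 : (-A).mulVec ((exp (s • (-A))).mulVec (G s)) +
        (exp (s • (-A))).mulVec (A.mulVec (G s) + c s) =
        (exp (s • (-A))).mulVec (c s) := by
      have hcomm : (-A) * exp (s • (-A)) = exp (s • (-A)) * (-A) := by
        letI : SeminormedRing (Matrix (Fin nn) (Fin nn) ℝ) := Matrix.linftyOpSemiNormedRing
        letI : NormedRing (Matrix (Fin nn) (Fin nn) ℝ) := Matrix.linftyOpNormedRing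
        letI : NormedAlgebra ℝ (Matrix (Fin nn) (Fin nn) ℝ) := Matrix.linftyOpNormedAlgebra
        exact (((Commute.refl (-A)).smul_right s).exp_right).eq
      rw [Matrix.mulVec_mulVec, hcomm, ← Matrix.mulVec_mulVec, ← Matrix.mulVec_add]
      congr 1
      rw [Matrix.neg_mulVec, neg_add_cancel_left]
    rwa [h2] at h
  have hQcont : Continuous fun s => (exp (s • (-A))).mulVec (c s) :=
    continuous_exp_mulVec _ hc
  have hFTC : ∀ s : ℝ, (∫ τ in (0:ℝ)..s, (exp (τ • (-A))).mulVec (c τ)) = Q s - Q 0 := by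
    intro s
    exact intervalIntegral.integral_eq_sub_of_hasDerivAt (fun τ _ => hQ τ)
      (hQcont.intervalIntegrable 0 s)
  have hQ0 : Q 0 = x₀ := by simp [hQdef, hG0]
  -- rewrite the integrand
  have hsplit : ∀ τ : ℝ, C.mulVec ((exp ((t - τ) • A)).mulVec (c τ)) =
      (mulVecL (C * exp (t • A))) ((exp (τ • (-A))).mulVec (c τ)) := by
    intro τ
    have hadd : exp ((t - τ) • A) = exp (t • A) * exp (τ • (-A)) := by
      have hc2 : Commute (t • A) (τ • (-A)) :=
        (((Commute.refl A).neg_right).smul_right τ).smul_left t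
      rw [← Matrix.exp_add_of_commute _ _ hc2]
      congr 1
      rw [smul_neg, sub_smul]
      abel
    rw [hadd, mulVecL_apply, ← Matrix.mulVec_mulVec, ← Matrix.mulVec_mulVec,
      Matrix.mulVec_mulVec]
  calc C.mulVec ((exp (t • A)).mulVec x₀) +
        (∫ τ in (0:ℝ)..t, C.mulVec ((exp ((t - τ) • A)).mulVec (c τ)))
      = C.mulVec ((exp (t • A)).mulVec x₀) +
        (∫ τ in (0:ℝ)..t, (mulVecL (C * exp (t • A))) ((exp (τ • (-A))).mulVec (c τ))) := by
        rw [intervalIntegral.integral_congr (fun τ _ => hsplit τ)]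
    _ = C.mulVec ((exp (t • A)).mulVec x₀) +
        (mulVecL (C * exp (t • A))) (∫ τ in (0:ℝ)..t, (exp (τ • (-A))).mulVec (c τ)) := by
        rw [(mulVecL (C * exp (t • A))).intervalIntegral_comp_comm
          (hQcont.intervalIntegrable 0 t)]
    _ = C.mulVec (G t) := by
        rw [hFTC t, hQ0, map_sub, mulVecL_apply, mulVecL_apply]
        have h1 : (C * exp (t • A)).mulVec (Q t) = C.mulVec (G t) := by
          rw [hQdef]
          rw [Matrix.mulVec_mulVec, Matrix.mul_assoc, exp_mul_exp_neg, Matrix.mul_one]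
        have h2 : (C * exp (t • A)).mulVec x₀ = C.mulVec ((exp (t • A)).mulVec x₀) := by
          rw [Matrix.mulVec_mulVec]
        rw [h1, h2]
        abel

end TrackAux

open TrackAux

/-- **Corollary: trackable but not realizable when `q < p`.** If `q < p`,
`C·B` has full row rank, and `y_d` is `C¹` with `y_d(0) = C·x₀`, then there are two
continuous inputs, differing at some time in `[0,T]`, that both generate the output `y_d`. -/
theorem trackable_not_realizable_of_under_determined
    (T : ℝ) (hT : 0 < T) (n p q : ℕ) (hqp : q < p)
    (A : Matrix (Fin n) (Fin n) ℝ) (B : Matrix (Fin n) (Fin p) ℝ)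
    (C : Matrix (Fin q) (Fin n) ℝ) (x₀ : Fin n → ℝ)
    (w : ℝ → Fin n → ℝ) (hw : ContinuousOn w (Icc 0 T))
    (hCB : Function.Surjective fun x : Fin p → ℝ => (C * B).mulVec x)
    (yd : ℝ → Fin q → ℝ) (hyd : ContDiffOn ℝ 1 yd (Icc 0 T))
    (hyd0 : yd 0 = C.mulVec x₀) :
    ∃ u₁ u₂ : ℝ → Fin p → ℝ, ContinuousOn u₁ (Icc 0 T) ∧ ContinuousOn u₂ (Icc 0 T) ∧
      (∃ t ∈ Icc (0:ℝ) T, u₁ t ≠ u₂ t) ∧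
      (∀ t ∈ Icc (0:ℝ) T,
        C.mulVec ((NormedSpace.exp (t • A)).mulVec x₀) +
          (∫ τ in (0:ℝ)..t,
            C.mulVec ((NormedSpace.exp ((t - τ) • A)).mulVec (B.mulVec (u₁ τ) + w τ))) = yd t) ∧
      (∀ t ∈ Icc (0:ℝ) T,
        C.mulVec ((NormedSpace.exp (t • A)).mulVec x₀) +
          (∫ τ in (0:ℝ)..t,
            C.mulVec ((NormedSpace.exp ((t - τ) • A)).mulVec (B.mulVec (u₂ τ) + w τ))) = yd t) := by
  classical
  -- a matrix right inverse `M` of `C * B`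
  obtain ⟨M, hM⟩ : ∃ M : Matrix (Fin p) (Fin q) ℝ, C * B * M = 1 := by
    refine ⟨Matrix.of fun j i => (hCB (Pi.single i 1)).choose j, ?_⟩
    ext l i
    have hspec : (C * B).mulVec ((hCB (Pi.single i 1)).choose) = Pi.single i 1 :=
      (hCB (Pi.single i 1)).choose_spec
    have h3 : ((C * B) * Matrix.of fun j i => (hCB (Pi.single i 1)).choose j) l i =
        (C * B).mulVec ((hCB (Pi.single i 1)).choose) l := by
      simp [Matrix.mul_apply, Matrix.mulVec, dotProduct]
    rw [h3, hspec]
    simp [Matrix.one_apply, Pi.single_apply, eq_comm]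
  -- a nonzero kernel vector of `C * B`
  obtain ⟨v₀, hv₀ne, hv₀⟩ : ∃ v₀ : Fin p → ℝ, v₀ ≠ 0 ∧ (C * B).mulVec v₀ = 0 := by
    by_contra hcon
    push_neg at hcon
    have hinj : Function.Injective (Matrix.mulVecLin (C * B)) := by
      rw [← LinearMap.ker_eq_bot, LinearMap.ker_eq_bot']
      intro v hv
      by_contra hv0
      exact (hcon v hv0) (by simpa using hv)
    have hle := LinearMap.finrank_le_finrank_of_injective hinj
    simp [Module.finrank_fintype_fun_eq_card] at hle
    omega
  -- globally continuous extensions of `w` and of the derivative of `yd`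
  set wt : ℝ → Fin n → ℝ := fun t => w (projIcc 0 T hT.le t) with hwt
  have hwtc : Continuous wt := hw.restrict.comp continuous_projIcc
  have hwteq : ∀ t ∈ Icc (0:ℝ) T, wt t = w t := by
    intro t ht
    simp [hwt, projIcc_of_mem hT.le ht]
  set ydot : ℝ → Fin q → ℝ := fun t => derivWithin yd (Icc 0 T) (projIcc 0 T hT.le t) with hydot
  have hydotc : Continuous ydot := by
    have h1 : ContinuousOn (derivWithin yd (Icc 0 T)) (Icc 0 T) :=
      hyd.continuousOn_derivWithin (uniqueDiffOn_Icc hT) le_rfl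
    exact h1.restrict.comp continuous_projIcc
  -- FTC representation of yd on [0, T]
  have hydFTC : ∀ t ∈ Icc (0:ℝ) T, yd t = yd 0 + ∫ s in (0:ℝ)..t, ydot s := by
    intro t ht
    have hsub : Icc (0:ℝ) t ⊆ Icc 0 T := Icc_subset_Icc le_rfl ht.2
    have hder : ∀ x ∈ Ioo (0:ℝ) t, HasDerivWithinAt yd (ydot x) (Ioi x) x := by
      intro x hx
      have hxI : x ∈ Icc (0:ℝ) T := hsub (Ioo_subset_Icc_self hx)
      have hxint : Icc (0:ℝ) T ∈ nhds x :=
        Icc_mem_nhds (lt_of_lt_of_le hx.1 (le_refl x) |>.trans_le le_rfl)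
          (lt_of_lt_of_le hx.2 ht.2)
      have hdiff : DifferentiableWithinAt ℝ yd (Icc 0 T) x :=
        (hyd.differentiableOn (by norm_num)) x hxI
      have hda : HasDerivAt yd (derivWithin yd (Icc 0 T) x) x :=
        (hdiff.hasDerivWithinAt.hasDerivAt hxint)
      have : ydot x = derivWithin yd (Icc 0 T) x := by
        simp [hydot, projIcc_of_mem hT.le hxI]
      rw [this]
      exact hda.hasDerivWithinAt
    have := intervalIntegral.integral_eq_sub_of_hasDeriv_right_of_le ht.1
      ((hyd.continuousOn).mono hsub) hder
      ((hydotc.intervalIntegrable 0 t))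
    rw [this]
    abel
  -- the data of the tracking construction
  set K : Matrix (Fin p) (Fin n) ℝ := M * (C * A) with hK
  set At : Matrix (Fin n) (Fin n) ℝ := A - B * K with hAt
  have hCAt : C * At = 0 := by
    have h4 : C * (B * K) = C * A := by
      rw [hK]
      calc C * (B * (M * (C * A))) = (C * B * M) * (C * A) := by simp only [Matrix.mul_assoc]
        _ = C * A := by rw [hM, Matrix.one_mul]
    rw [hAt, Matrix.mul_sub, h4, sub_self]
  have hCBM : ∀ z : Fin q → ℝ, C.mulVec (B.mulVec (M.mulVec z)) = z := by
    intro z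
    rw [Matrix.mulVec_mulVec, Matrix.mulVec_mulVec, hM, Matrix.one_mulVec]
  -- ψ' and the inhomogeneity b
  set ψ' : ℝ → Fin q → ℝ :=
    fun t => ydot t - (C * A).mulVec ((NormedSpace.exp (t • A)).mulVec x₀) with hψ'
  have hψ'c : Continuous ψ' := by
    apply hydotc.sub
    exact cont_mulVec (C * A) (continuous_exp_mulVec A continuous_const)
  set b : ℝ → Fin n → ℝ :=
    fun t => B.mulVec (M.mulVec (ψ' t)) + (wt t - B.mulVec (M.mulVec (C.mulVec (wt t)))) with hb
  have hbc : Continuous b := by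
    apply Continuous.add
    · exact cont_mulVec B (cont_mulVec M hψ'c)
    · exact hwtc.sub (cont_mulVec B (cont_mulVec M (cont_mulVec C hwtc)))
  obtain ⟨F, hF0, hFc, hF⟩ := solveLin At hbc
  obtain ⟨F₀, hF₀0, hF₀c, hF₀⟩ := solveLin At (b := fun _ => B.mulVec v₀) continuous_const
  -- the two inputs
  set u₁ : ℝ → Fin p → ℝ :=
    fun t => M.mulVec (ψ' t) - K.mulVec (F t) - M.mulVec (C.mulVec (wt t)) with hu₁
  set u₀ : ℝ → Fin p → ℝ := fun t => v₀ - K.mulVec (F₀ t) with hu₀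
  set u₂ : ℝ → Fin p → ℝ := fun t => u₁ t + u₀ t with hu₂
  have hu₁c : Continuous u₁ := by
    apply Continuous.sub
    · exact (cont_mulVec M hψ'c).sub (cont_mulVec K hFc)
    · exact cont_mulVec M (cont_mulVec C hwtc)
  have hu₀c : Continuous u₀ := continuous_const.sub (cont_mulVec K hF₀c)
  have hu₂c : Continuous u₂ := hu₁c.add hu₀c
  -- the trajectories
  set G₁ : ℝ → Fin n → ℝ := fun t => (NormedSpace.exp (t • A)).mulVec x₀ + F t with hG₁
  set G₂ : ℝ → Fin n → ℝ := fun t => G₁ t + F₀ t with hG₂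
  have hG₁0 : G₁ 0 = x₀ := by simp [hG₁, hF0, exp_zero]
  have hG₂0 : G₂ 0 = x₀ := by simp [hG₂, hG₁0, hF₀0]
  have hexp' : ∀ t : ℝ, HasDerivAt (fun s => (NormedSpace.exp (s • A)).mulVec x₀)
      (A.mulVec ((NormedSpace.exp (t • A)).mulVec x₀)) t := by
    intro t
    have := hasDerivAt_exp_mulVec A (hasDerivAt_const t x₀)
    simpa using this
  have hG₁' : ∀ t, HasDerivAt G₁ (A.mulVec (G₁ t) + (B.mulVec (u₁ t) + wt t)) t := by
    intro t
    have h := (hexp' t).add (hF t)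
    have heq : A.mulVec ((NormedSpace.exp (t • A)).mulVec x₀) + (At.mulVec (F t) + b t) =
        A.mulVec (G₁ t) + (B.mulVec (u₁ t) + wt t) := by
      simp only [hG₁, hAt, hb, hu₁, Matrix.mulVec_add, Matrix.mulVec_sub, Matrix.sub_mulVec,
        Matrix.mulVec_mulVec]
      abel
    rwa [heq] at h
  have hG₂' : ∀ t, HasDerivAt G₂ (A.mulVec (G₂ t) + (B.mulVec (u₂ t) + wt t)) t := by
    intro t
    have h := (hG₁' t).add (hF₀ t)
    have heq : A.mulVec (G₁ t) + (B.mulVec (u₁ t) + wt t) + (At.mulVec (F₀ t) + B.mulVec v₀) =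
        A.mulVec (G₂ t) + (B.mulVec (u₂ t) + wt t) := by
      simp only [hG₂, hu₂, hu₀, hAt, Matrix.mulVec_add, Matrix.mulVec_sub, Matrix.sub_mulVec,
        Matrix.mulVec_mulVec]
      abel
    rwa [heq] at h
  -- `C G₁ = yd` on `[0,T]`
  have hCF : ∀ t, HasDerivAt (fun s => C.mulVec (G₁ s)) (ydot t) t := by
    intro t
    have h := hasDerivAt_mulVec C (hG₁' t)
    have heq : C.mulVec (A.mulVec (G₁ t) + (B.mulVec (u₁ t) + wt t)) = ydot t := by
      rw [hG₁]
      simp only [hu₁, Matrix.mulVec_add, Matrix.mulVec_sub]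
      rw [hCBM (ψ' t), hCBM (C.mulVec (wt t))]
      have hKC : C.mulVec (B.mulVec (K.mulVec (F t))) = (C * A).mulVec (F t) := by
        have h5 : C * B * K = C * A := by
          rw [hK]
          calc C * B * (M * (C * A)) = (C * B * M) * (C * A) := by simp only [Matrix.mul_assoc]
            _ = C * A := by rw [hM, Matrix.one_mul]
        rw [Matrix.mulVec_mulVec, Matrix.mulVec_mulVec, h5]
      rw [hKC]
      simp only [hψ', Matrix.mulVec_add, Matrix.mulVec_mulVec, Matrix.mul_assoc]
      abel
    rwa [heq] at h
  have hCG₁ : ∀ t ∈ Icc (0:ℝ) T, C.mulVec (G₁ t) = yd t := by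
    intro t ht
    have hint := intervalIntegral.integral_eq_sub_of_hasDerivAt
      (f := fun s => C.mulVec (G₁ s)) (f' := ydot) (fun τ _ => hCF τ)
      (hydotc.intervalIntegrable 0 t)
    have h0 : C.mulVec (G₁ 0) = yd 0 := by rw [hG₁0, hyd0]
    have hint' : (∫ y in (0:ℝ)..t, ydot y) = C.mulVec (G₁ t) - C.mulVec (G₁ 0) := hint
    rw [hydFTC t ht, hint', h0]
    abel
  -- `C F₀ = 0`, hence `C G₂ = yd` on `[0,T]`
  have hCF₀ : ∀ t, HasDerivAt (fun s => C.mulVec (F₀ s)) (0 : Fin q → ℝ) t := by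
    intro t
    have h := hasDerivAt_mulVec C (hF₀ t)
    have heq : C.mulVec (At.mulVec (F₀ t) + B.mulVec v₀) = 0 := by
      rw [Matrix.mulVec_add, Matrix.mulVec_mulVec, Matrix.mulVec_mulVec, hCAt, hv₀,
        Matrix.zero_mulVec, zero_add]
    rwa [heq] at h
  have hCF₀eq : ∀ t : ℝ, C.mulVec (F₀ t) = 0 := by
    intro t
    have hint := intervalIntegral.integral_eq_sub_of_hasDerivAt
      (f := fun s => C.mulVec (F₀ s)) (f' := fun _ => (0 : Fin q → ℝ)) (fun τ _ => hCF₀ τ)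
      (continuous_const.intervalIntegrable 0 t)
    have hint' : (∫ _ in (0:ℝ)..t, (0 : Fin q → ℝ)) = C.mulVec (F₀ t) - C.mulVec (F₀ 0) := hint
    have h6 : C.mulVec (F₀ 0) = 0 := by rw [hF₀0, Matrix.mulVec_zero]
    rw [h6, sub_zero] at hint'
    rw [← hint']
    simp
  have hCG₂ : ∀ t ∈ Icc (0:ℝ) T, C.mulVec (G₂ t) = yd t := by
    intro t ht
    rw [hG₂]
    simp only [Matrix.mulVec_add]
    rw [hCF₀eq t, add_zero]
    exact hCG₁ t ht
  -- outputs
  have houtput : ∀ (u : ℝ → Fin p → ℝ) (G : ℝ → Fin n → ℝ), Continuous u → G 0 = x₀ →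
      (∀ t, HasDerivAt G (A.mulVec (G t) + (B.mulVec (u t) + wt t)) t) →
      ∀ t ∈ Icc (0:ℝ) T,
        C.mulVec ((NormedSpace.exp (t • A)).mulVec x₀) +
          (∫ τ in (0:ℝ)..t,
            C.mulVec ((NormedSpace.exp ((t - τ) • A)).mulVec (B.mulVec (u τ) + w τ))) =
        C.mulVec (G t) := by
    intro u G huc hG0 hG' t ht
    have hcc : Continuous fun s => B.mulVec (u s) + wt s :=
      (cont_mulVec B huc).add hwtc
    have hcongr : EqOn
        (fun τ => C.mulVec ((NormedSpace.exp ((t - τ) • A)).mulVec (B.mulVec (u τ) + w τ)))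
        (fun τ => C.mulVec ((NormedSpace.exp ((t - τ) • A)).mulVec (B.mulVec (u τ) + wt τ)))
        (uIcc 0 t) := by
      intro τ hτ
      have hτI : τ ∈ Icc (0:ℝ) T := by
        rw [uIcc_of_le ht.1] at hτ
        exact Icc_subset_Icc le_rfl ht.2 hτ
      simp only
      rw [hwteq τ hτI]
    rw [intervalIntegral.integral_congr hcongr]
    exact output_eq A B C x₀ hcc hG0 hG' t
  refine ⟨u₁, u₂, hu₁c.continuousOn, hu₂c.continuousOn, ⟨0, ⟨le_rfl, hT.le⟩, ?_⟩, ?_, ?_⟩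
  · intro hcontra
    apply hv₀ne
    have : u₂ 0 - u₁ 0 = 0 := by rw [← hcontra]; abel
    have h2 : u₀ 0 = 0 := by
      rw [hu₂] at this
      simpa using this
    rw [hu₀] at h2
    simpa [hF₀0] using h2
  · intro t ht
    rw [houtput u₁ G₁ hu₁c hG₁0 hG₁' t ht]
    exact hCG₁ t ht
  · intro t ht
    rw [houtput u₂ G₂ hu₂c hG₂0 hG₂' t ht]
    exact hCG₂ t ht
end
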